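/- arXiv:1903.03311 — 8 statements merged into one kernel-verified Lean document; each statement's English description precedes it below -/
import Mathlib

section
/- If a connected graph G is P4-free (contains no path on 4 vertices as an induced subgraph) and is not complete, then G contains a spanning complete bipartite subgraph K_{m,n} with min{2, κ(G)} ≤ n ≤ m such that one partite set of this K_{m,n} is a minimum vertex cutset of G. -/
open SimpleGraph

/-- A walk is properly colored: no two consecutive edges share a color. -/
def ProperWalk {V : Type*} {G : SimpleGraph V} (c : Sym2 V → ℕ) {u v : V} (p : G.Walk u v) : Prop :=
  (p.edges.map c).Chain' (· ≠ ·)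

/-- An edge-colored graph is properly connected. -/
def ProperlyConnected {V : Type*} (G : SimpleGraph V) (c : Sym2 V → ℕ) : Prop :=
  ∀ u v : V, u ≠ v → ∃ p : G.Walk u v, p.IsPath ∧ ProperWalk c p

/-- Number of edges recolored away from the base color 0. -/
noncomputable def numRecolored {V : Type*} (G : SimpleGraph V) (c : Sym2 V → ℕ) : ℕ :=
  {e | e ∈ G.edgeSet ∧ c e ≠ 0}.ncard

/-- Number of new colors used. -/
noncomputable def numNewColors {V : Type*} (G : SimpleGraph V) (c : Sym2 V → ℕ) : ℕ :=
  (c '' {e | e ∈ G.edgeSet ∧ c e ≠ 0}).ncard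

/-- Optimal proper connection number: minimum of p + q. -/
noncomputable def pcOpt {V : Type*} (G : SimpleGraph V) : ℕ :=
  sInf { n | ∃ c : Sym2 V → ℕ, ProperlyConnected G c ∧
    n = numRecolored G c + numNewColors G c }

/-- P4-free: no induced path on 4 vertices. -/
def P4Free {V : Type*} (G : SimpleGraph V) : Prop :=
  ¬ ∃ a b c d : V, a ≠ b ∧ a ≠ c ∧ a ≠ d ∧ b ≠ c ∧ b ≠ d ∧ c ≠ d ∧
    G.Adj a b ∧ G.Adj b c ∧ G.Adj c d ∧ ¬ G.Adj a c ∧ ¬ G.Adj a d ∧ ¬ G.Adj b d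

/-- S is a vertex cutset: removing S disconnects the graph. -/
def IsCutset {V : Type*} (G : SimpleGraph V) (S : Set V) : Prop :=
  ¬ (G.induce (Sᶜ)).Preconnected

/-- S is a minimum vertex cutset. -/
def IsMinCutset {V : Type*} (G : SimpleGraph V) (S : Set V) : Prop :=
  IsCutset G S ∧ ∀ T : Set V, IsCutset G T → S.ncard ≤ T.ncard

/-- Vertex connectivity: the minimum size of a cutset. -/
noncomputable def vertexConnectivity {V : Type*} (G : SimpleGraph V) : ℕ :=
  sInf { n | ∃ S : Set V, IsCutset G S ∧ n = S.ncard }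

namespace AuxPf

variable {V : Type*} {G : SimpleGraph V}

def Reach (G : SimpleGraph V) (W : Set V) (a b : V) : Prop :=
  ∃ p : G.Walk a b, ∀ x ∈ p.support, x ∈ W

lemma reach_refl {W : Set V} {a : V} (ha : a ∈ W) : Reach G W a a :=
  ⟨SimpleGraph.Walk.nil, by simp [ha]⟩

lemma reach_symm {W : Set V} {a b : V} (h : Reach G W a b) : Reach G W b a := by
  obtain ⟨p, hp⟩ := h
  exact ⟨p.reverse, by simpa [SimpleGraph.Walk.support_reverse] using hp⟩

lemma reach_trans {W : Set V} {a b c : V} (h1 : Reach G W a b) (h2 : Reach G W b c) :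
    Reach G W a c := by
  obtain ⟨p, hp⟩ := h1; obtain ⟨q, hq⟩ := h2
  refine ⟨p.append q, fun x hx => ?_⟩
  rcases (SimpleGraph.Walk.mem_support_append_iff p q).1 hx with h | h
  · exact hp x h
  · exact hq x h

lemma reach_adj {W : Set V} {a b : V} (h : G.Adj a b) (ha : a ∈ W) (hb : b ∈ W) :
    Reach G W a b :=
  ⟨SimpleGraph.Walk.cons h SimpleGraph.Walk.nil, by simp [ha, hb]⟩

lemma reach_of_induce {W : Set V} {x y : W} (h : (G.induce W).Reachable x y) :
    Reach G W x.1 y.1 := by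
  obtain ⟨p⟩ := h
  induction p with
  | nil => exact reach_refl (Subtype.coe_prop _)
  | @cons a c d h q ih =>
    exact reach_trans (reach_adj (by exact h) a.2 c.2) ih

lemma induce_of_reach {W : Set V} : ∀ {a b : V} (p : G.Walk a b),
    (∀ x ∈ p.support, x ∈ W) → ∀ (ha : a ∈ W) (hb : b ∈ W),
    (G.induce W).Reachable ⟨a, ha⟩ ⟨b, hb⟩ := by
  intro a b p
  induction p with
  | nil => intro _ ha hb; exact Reachable.refl _
  | @cons a c d h q ih =>
    intro hsup ha hb
    have hc : c ∈ W := hsup c (by simp)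
    have h1 : (G.induce W).Adj ⟨a, ha⟩ ⟨c, hc⟩ := by
      simp only [SimpleGraph.comap_adj, Function.Embedding.coe_subtype]
      exact h
    exact (h1.reachable).trans (ih (fun x hx => hsup x (by simp [hx])) hc hb)

lemma induce_of_reach' {W : Set V} {x y : W} (h : Reach G W x.1 y.1) :
    (G.induce W).Reachable x y := by
  obtain ⟨p, hp⟩ := h
  simpa using induce_of_reach p hp x.2 y.2

/-- One-sided: a walk inside `W ∪ {s}` either stays in `W` or reaches a neighbor of `s`. -/
lemma lemF {W : Set V} {s : V} : ∀ {a b : V} (p : G.Walk a b),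
    (∀ x ∈ p.support, x ∈ W ∪ {s}) → a ∈ W →
    Reach G W a b ∨ ∃ y ∈ W, G.Adj s y ∧ Reach G W a y := by
  intro a b p
  induction p with
  | nil => intro _ ha; exact Or.inl (reach_refl ha)
  | @cons a c d h q ih =>
    intro hsup ha
    rcases hsup c (by simp) with hc | hc
    · rcases ih (fun x hx => hsup x (by simp [hx])) hc with h1 | ⟨y, hy, hsy, hr⟩
      · exact Or.inl (reach_trans (reach_adj h ha hc) h1)
      · exact Or.inr ⟨y, hy, hsy, reach_trans (reach_adj h ha hc) hr⟩
    · refine Or.inr ⟨a, ha, ?_, reach_refl ha⟩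
      rw [Set.mem_singleton_iff] at hc
      exact hc ▸ h.symm

/-- First place along a walk where adjacency to `s` is lost. -/
lemma lemSwitch {W : Set V} {s : V} : ∀ {a b : V} (p : G.Walk a b),
    (∀ x ∈ p.support, x ∈ W) → G.Adj s a → ¬ G.Adj s b →
    ∃ y ∈ W, ∃ x ∈ W, G.Adj s y ∧ ¬ G.Adj s x ∧ G.Adj y x ∧ Reach G W x b := by
  intro a b p
  induction p with
  | nil => intro _ hsa hsb; exact absurd hsa hsb
  | @cons a c d h q ih =>
    intro hsup hsa hsb
    have hc : c ∈ W := hsup c (by simp)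
    by_cases hsc : G.Adj s c
    · exact ih (fun x hx => hsup x (by simp [hx])) hsc hsb
    · exact ⟨a, hsup a (by simp), c, hc, hsa, hsc, h,
        ⟨q, fun x hx => hsup x (by simp [hx])⟩⟩

lemma two_vertex {u v : V} (h : Reach G {u, v} u v) : u = v ∨ G.Adj u v := by
  obtain ⟨q, hq⟩ := h
  cases q with
  | nil => exact Or.inl rfl
  | @cons _ c _ h q' =>
    have : c = u ∨ c = v := by simpa using hq c (by simp)
    rcases this with rfl | rfl
    · exact absurd h (G.irrefl)
    · exact Or.inr h

end AuxPf

theorem stmt0 {V : Type*} [Fintype V] (G : SimpleGraph V)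
    (hconn : G.Connected) (hP4 : P4Free G)
    (hnc : ¬ ∀ u v : V, u ≠ v → G.Adj u v) :
    ∃ A B : Set V, A.Nonempty ∧ B.Nonempty ∧ Disjoint A B ∧ A ∪ B = Set.univ ∧
      (∀ a ∈ A, ∀ b ∈ B, G.Adj a b) ∧
      IsMinCutset G B ∧
      min 2 (vertexConnectivity G) ≤ min A.ncard B.ncard := by
  classical
  push_neg at hnc
  obtain ⟨u, v, huv, hnadj⟩ := hnc
  -- there is a cutset
  have hcutex : IsCutset G (({u, v} : Set V)ᶜ) := by
    intro hpre
    rw [compl_compl] at hpre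
    have hr := AuxPf.reach_of_induce
      (hpre ⟨u, by simp⟩ ⟨v, by simp [Set.mem_insert_iff]⟩)
    rcases AuxPf.two_vertex hr with h | h
    · exact huv h
    · exact hnadj h
  have hKne : ({ n | ∃ S : Set V, IsCutset G S ∧ n = S.ncard }).Nonempty :=
    ⟨_, ⟨_, hcutex, rfl⟩⟩
  obtain ⟨S, hScut, hScard⟩ := Nat.sInf_mem hKne
  have hmin : ∀ T : Set V, IsCutset G T → S.ncard ≤ T.ncard := by
    intro T hT
    rw [← hScard]
    exact Nat.sInf_le ⟨T, hT, rfl⟩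
  -- the two sides of the cut
  have hnpre := hScut
  simp only [IsCutset, SimpleGraph.Preconnected, not_forall] at hnpre
  obtain ⟨u₀, v₀, hnr⟩ := hnpre
  have hneuv : u₀.1 ≠ v₀.1 := by
    intro h
    exact hnr (Subtype.ext h ▸ Reachable.refl _)
  have hnruv : ¬ AuxPf.Reach G Sᶜ u₀.1 v₀.1 := fun h => hnr (AuxPf.induce_of_reach' h)
  -- S is nonempty
  have hSne : S.Nonempty := by
    rw [Set.nonempty_iff_ne_empty]
    rintro rfl
    refine hnr (AuxPf.induce_of_reach' ?_)
    obtain ⟨p⟩ := hconn.preconnected u₀.1 v₀.1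
    exact ⟨p, fun z _ => by simp⟩
  -- the key adjacency claim
  have hadj : ∀ s ∈ S, ∀ x ∈ Sᶜ, G.Adj s x := by
    intro s hs x₀ hx₀
    by_contra hnadj'
    have hTnotcut : ¬ IsCutset G (S \ {s}) := by
      intro hT
      have h1 := hmin _ hT
      have h2 : (S \ {s}).ncard < S.ncard :=
        Set.ncard_diff_singleton_lt_of_mem hs (Set.toFinite S)
      omega
    have hTpre : (G.induce ((S \ {s})ᶜ)).Preconnected := not_not.mp hTnotcut
    have hTc : (S \ {s})ᶜ = Sᶜ ∪ {s} := by
      ext z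
      by_cases hz : z = s <;> simp [hz, hs]
    have hW' : ∀ a b : V, a ∈ Sᶜ → b ∈ Sᶜ → AuxPf.Reach G (Sᶜ ∪ {s}) a b := by
      intro a b ha hb
      have ha' : a ∈ (S \ {s})ᶜ := by rw [hTc]; exact Or.inl ha
      have hb' : b ∈ (S \ {s})ᶜ := by rw [hTc]; exact Or.inl hb
      have h3 : AuxPf.Reach G ((S \ {s})ᶜ) a b :=
        AuxPf.reach_of_induce (hTpre ⟨a, ha'⟩ ⟨b, hb'⟩)
      rwa [hTc] at h3
    obtain ⟨w, hw, hwx⟩ : ∃ w, w ∈ Sᶜ ∧ ¬ AuxPf.Reach G Sᶜ w x₀ := by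
      by_cases h : AuxPf.Reach G Sᶜ u₀.1 x₀
      · exact ⟨v₀.1, v₀.2, fun h2 => hnruv (AuxPf.reach_trans h (AuxPf.reach_symm h2))⟩
      · exact ⟨u₀.1, u₀.2, h⟩
    obtain ⟨p, hp⟩ := hW' w x₀ hw hx₀
    rcases AuxPf.lemF p hp hw with h1 | ⟨y₁, hy₁, hsy₁, hry₁⟩
    · exact hwx h1
    obtain ⟨p2, hp2⟩ := hW' x₀ w hx₀ hw
    rcases AuxPf.lemF p2 hp2 hx₀ with h1 | ⟨z₁, hz₁, hsz₁, hrz₁⟩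
    · exact hwx (AuxPf.reach_symm h1)
    obtain ⟨q, hq⟩ := AuxPf.reach_symm hrz₁
    obtain ⟨y, hy, x, hx, hsy, hsx, hyx, hrx⟩ := AuxPf.lemSwitch q hq hsz₁ hnadj'
    have hry : AuxPf.Reach G Sᶜ y x₀ := AuxPf.reach_trans (AuxPf.reach_adj hyx hy hx) hrx
    -- build the induced P4 : y₁ - s - y - x
    refine hP4 ⟨y₁, s, y, x, ?_, ?_, ?_, ?_, ?_, hyx.ne, hsy₁.symm, hsy, hyx, ?_, ?_, hsx⟩
    · intro h; exact (h ▸ hy₁) hs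
    · intro h
      exact hwx (AuxPf.reach_trans hry₁ (h ▸ hry))
    · intro h
      exact hwx (AuxPf.reach_trans hry₁ (h ▸ hrx))
    · intro h; exact (h ▸ hy) hs
    · intro h; exact (h ▸ hx) hs
    · intro h
      exact hwx (AuxPf.reach_trans hry₁ (AuxPf.reach_trans (AuxPf.reach_adj h hy₁ hy) hry))
    · intro h
      exact hwx (AuxPf.reach_trans hry₁ (AuxPf.reach_trans (AuxPf.reach_adj h hy₁ hx) hrx))
  refine ⟨Sᶜ, S, ⟨u₀.1, u₀.2⟩, hSne, disjoint_compl_left, Set.compl_union_self S,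
    fun a ha b hb => (hadj b hb a ha).symm, ⟨hScut, hmin⟩, ?_⟩
  have h2A : 2 ≤ Sᶜ.ncard := by
    have : 1 < Sᶜ.ncard := by
      rw [Set.one_lt_ncard_iff (Set.toFinite _)]
      exact ⟨u₀.1, v₀.1, u₀.2, v₀.2, hneuv⟩
    omega
  have hκ : vertexConnectivity G = S.ncard := hScard
  refine le_min ((min_le_left _ _).trans h2A) ?_
  rw [hκ]
  exact min_le_right _ _
end

section
/- Every vertex of a minimum cutset of a connected non-complete P4-free graph is adjacent to every vertex outside the cutset. -/
open SimpleGraph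

section Aux
variable {V : Type*}

lemma auxW (G : SimpleGraph V) (S : Set V) (x : V) :
    ∀ {a b : ↑((S \ {x})ᶜ)} (_ : (G.induce ((S \ {x})ᶜ)).Walk a b)
      (ha : a.1 ∉ S) (hb : b.1 ∉ S),
    (G.induce Sᶜ).Reachable ⟨a.1, ha⟩ ⟨b.1, hb⟩ ∨
      ∃ z : ↑(Sᶜ), G.Adj x z.1 ∧ (G.induce Sᶜ).Reachable ⟨a.1, ha⟩ z := by
  intro a b p
  induction p with
  | nil =>
    intro ha hb
    left
    exact Reachable.refl _
  | cons hadj q ih =>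
    rename_i a m b
    intro ha hb
    by_cases hm : m.1 ∈ S
    · have hmx : m.1 = x := by
        have := m.2
        simp only [Set.mem_compl_iff, Set.mem_diff, Set.mem_singleton_iff] at this
        tauto
      right
      refine ⟨⟨a.1, ha⟩, ?_, Reachable.refl _⟩
      have : G.Adj a.1 m.1 := hadj
      rw [hmx] at this
      exact this.symm
    · have hedge : (G.induce Sᶜ).Adj ⟨a.1, ha⟩ ⟨m.1, hm⟩ := hadj
      rcases ih hm hb with hr | ⟨z, hz1, hz2⟩
      · left; exact hedge.reachable.trans hr
      · right; exact ⟨z, hz1, hedge.reachable.trans hz2⟩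

lemma auxA [Fintype V] (G : SimpleGraph V) (S : Set V) (hS : IsMinCutset G S)
    (x : V) (hx : x ∈ S) (c : ↑(Sᶜ)) :
    ∃ z : ↑(Sᶜ), G.Adj x z.1 ∧ (G.induce Sᶜ).Reachable c z := by
  by_contra hcon
  push_neg at hcon
  set T := S \ {x} with hT
  have hTcut : IsCutset G T := by
    intro hpre
    -- get u v not reachable in induce Sᶜ
    have hdis := hS.1
    unfold IsCutset SimpleGraph.Preconnected at hdis
    push_neg at hdis
    obtain ⟨u, v, huv⟩ := hdis
    obtain ⟨w, hw⟩ : ∃ w : ↑(Sᶜ), ¬ (G.induce Sᶜ).Reachable c w := by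
      by_cases h : (G.induce Sᶜ).Reachable c u
      · exact ⟨v, fun h2 => huv (h.symm.trans h2)⟩
      · exact ⟨u, h⟩
    have hcT : c.1 ∈ Tᶜ := fun hmem => c.2 hmem.1
    have hwT : w.1 ∈ Tᶜ := fun hmem => w.2 hmem.1
    obtain ⟨p⟩ := hpre ⟨c.1, hcT⟩ ⟨w.1, hwT⟩
    rcases auxW G S x p c.2 w.2 with hr | ⟨z, hz1, hz2⟩
    · exact hw hr
    · exact hcon z hz1 hz2
  have hlt : T.ncard < S.ncard := by
    apply Set.ncard_lt_ncard _ (Set.toFinite S)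
    constructor
    · exact Set.diff_subset
    · intro hsub
      exact (hsub hx).2 rfl
  exact absurd (hS.2 T hTcut) (not_le.mpr hlt)

lemma auxC (G : SimpleGraph V) (hP4 : P4Free G) (S : Set V) (x : V) (hx : x ∈ S)
    (z' : ↑(Sᶜ)) (hz' : G.Adj x z'.1) :
    ∀ {y z : ↑(Sᶜ)} (_ : (G.induce Sᶜ).Walk y z), ¬ G.Adj x y.1 → G.Adj x z.1 →
      ¬ (G.induce Sᶜ).Reachable y z' → False := by
  intro y z p
  induction p with
  | nil =>
    intro h1 h2 _
    exact h1 h2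
  | cons hadj q ih =>
    rename_i u c zend
    intro h1 h2 h3
    have huc : G.Adj u.1 c.1 := hadj
    have hedge : (G.induce Sᶜ).Adj u c := hadj
    by_cases hcx : G.Adj x c.1
    · -- build P4: z' - x - c - u
      apply hP4
      refine ⟨z'.1, x, c.1, u.1, ?_, ?_, ?_, ?_, ?_, ?_, hz'.symm, hcx, huc.symm, ?_, ?_, h1⟩
      · intro he; exact z'.2 (he ▸ hx)
      · intro he
        have : z' = c := Subtype.ext he
        exact h3 (this ▸ hedge.reachable)
      · intro he
        have : z' = u := Subtype.ext he
        exact h3 (this ▸ Reachable.refl _)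
      · intro he; exact c.2 (he ▸ hx)
      · intro he; exact u.2 (he ▸ hx)
      · exact fun he => huc.ne he.symm
      · intro hac
        have h4 : (G.induce Sᶜ).Adj z' c := hac
        exact h3 (hedge.reachable.trans h4.symm.reachable)
      · intro hau
        have h4 : (G.induce Sᶜ).Adj z' u := hau
        exact h3 h4.symm.reachable
    · exact ih hcx h2 (fun hr => h3 (hedge.reachable.trans hr))

end Aux

theorem stmt1 {V : Type*} [Fintype V] (G : SimpleGraph V) (hconn : G.Connected)
    (hnc : ¬ ∀ u v : V, u ≠ v → G.Adj u v) (hP4 : P4Free G)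
    (S : Set V) (hS : IsMinCutset G S) :
    ∀ x ∈ S, ∀ y ∉ S, G.Adj x y := by
  intro x hx y hy
  by_contra hxy
  have hyC : y ∈ Sᶜ := hy
  obtain ⟨z, hz, hr⟩ := auxA G S hS x hx ⟨y, hyC⟩
  -- find z' adjacent to x, not reachable from y
  have hdis := hS.1
  unfold IsCutset SimpleGraph.Preconnected at hdis
  push_neg at hdis
  obtain ⟨u, v, huv⟩ := hdis
  obtain ⟨w, hw⟩ : ∃ w : ↑(Sᶜ), ¬ (G.induce Sᶜ).Reachable ⟨y, hyC⟩ w := by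
    by_cases h : (G.induce Sᶜ).Reachable ⟨y, hyC⟩ u
    · exact ⟨v, fun h2 => huv (h.symm.trans h2)⟩
    · exact ⟨u, h⟩
  obtain ⟨z', hz'1, hz'2⟩ := auxA G S hS x hx w
  have hnr : ¬ (G.induce Sᶜ).Reachable ⟨y, hyC⟩ z' := fun h => hw (h.trans hz'2.symm)
  obtain ⟨p⟩ := hr
  exact auxC G hP4 S x hx z' hz'1 p hxy hz hnr
end

section
/- If G contains a good edge e, then recoloring only e with one new color makes G properly connected; in particular pc_opt(G) ≤ 2 when G has at least 3 vertices. -/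
open SimpleGraph

/-- An edge x₁x₂ is good. -/
def GoodEdge {V : Type*} (G : SimpleGraph V) (x₁ x₂ : V) : Prop :=
  G.Adj x₁ x₂ ∧ ∃ A₁ A₂ : Set V,
    A₁ ∪ A₂ = Set.univ \ (G.neighborSet x₁ ∩ G.neighborSet x₂) ∧
    Disjoint A₁ A₂ ∧
    A₁ ⊆ G.neighborSet x₁ ∧ A₂ ⊆ G.neighborSet x₂ ∧
    (∀ a ∈ A₁, ∀ b ∈ A₁, a ≠ b → G.Adj a b) ∧
    (∀ a ∈ A₂, ∀ b ∈ A₂, a ≠ b → G.Adj a b)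

/-!
Write `N(x)` for the neighbourhood of `x`. A vertex outside `N(x₂)` lies neither in
`N(x₁) ∩ N(x₂)` nor in `A₂`, hence in `A₁`: the non-neighbours of `x₂` form a clique inside
`N(x₁)`, and symmetrically. So two non-adjacent vertices `u ≠ v` are neighbours of `x₁` and
`x₂` respectively (in some order), and `u x₁ x₂ v` is properly coloured as soon as `x₁x₂` is
the only edge of its colour. With only `x₁x₂` recoloured, one edge and one new colour are used.
-/

section

variable {V : Type*} {G : SimpleGraph V}

lemma exists_properPath_of_adj (c : Sym2 V → ℕ) {u v : V} (h : G.Adj u v) :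
    ∃ p : G.Walk u v, p.IsPath ∧ ProperWalk c p :=
  ⟨h.toWalk, by simp [h.ne], List.isChain_singleton _⟩

lemma exists_properPath_through_edge {c : Sym2 V → ℕ} {a b : V}
    (hc : ∀ e, e ≠ s(a, b) → c e ≠ c s(a, b)) (hab : G.Adj a b) {u v : V}
    (hua : G.Adj u a) (hbv : G.Adj b v) (huv : u ≠ v) :
    ∃ p : G.Walk u v, p.IsPath ∧ ProperWalk c p := by
  by_cases hub : u = b
  · subst hub
    exact exists_properPath_of_adj c hbv
  by_cases hva : v = a
  · subst hva
    exact exists_properPath_of_adj c hua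
  refine ⟨.cons hua (.cons hab (.cons hbv .nil)), ?_, ?_⟩
  · simp [Walk.isPath_def, hua.ne, hub, huv, hab.ne, hbv.ne, Ne.symm hva]
  · have hua' : s(u, a) ≠ s(a, b) := by simp [hua.ne, hub]
    have hbv' : s(b, v) ≠ s(a, b) := by simp [hab.ne', hva]
    exact .cons_cons (hc _ hua') (.cons_cons (hc _ hbv').symm (.singleton _))

lemma GoodEdge.symm {x₁ x₂ : V} (h : GoodEdge G x₁ x₂) : GoodEdge G x₂ x₁ := by
  obtain ⟨hadj, A₁, A₂, hunion, hdisj, hA₁, hA₂, hcl₁, hcl₂⟩ := h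
  exact ⟨hadj.symm, A₂, A₁, by rw [Set.union_comm, hunion, Set.inter_comm], hdisj.symm,
    hA₂, hA₁, hcl₂, hcl₁⟩

lemma GoodEdge.compl_neighborSet_subset_and_isClique {x₁ x₂ : V} (h : GoodEdge G x₁ x₂) :
    (G.neighborSet x₂)ᶜ ⊆ G.neighborSet x₁ ∧ G.IsClique (G.neighborSet x₂)ᶜ := by
  obtain ⟨-, A₁, A₂, hunion, -, hA₁, hA₂, hcl₁, -⟩ := h
  have hsub : (G.neighborSet x₂)ᶜ ⊆ A₁ := by
    intro w hw
    have hw' : w ∈ A₁ ∪ A₂ := by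
      rw [hunion]
      exact ⟨Set.mem_univ w, fun hw₁₂ => hw hw₁₂.2⟩
    exact hw'.resolve_right fun hwA₂ => hw (hA₂ hwA₂)
  exact ⟨hsub.trans hA₁, Set.Pairwise.mono hsub hcl₁⟩

theorem GoodEdge.properlyConnected {x₁ x₂ : V} {c : Sym2 V → ℕ} (h : GoodEdge G x₁ x₂)
    (hc : ∀ e, e ≠ s(x₁, x₂) → c e ≠ c s(x₁, x₂)) : ProperlyConnected G c := by
  have hc' : ∀ e, e ≠ s(x₂, x₁) → c e ≠ c s(x₂, x₁) := by simpa only [Sym2.eq_swap] using hc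
  obtain ⟨hsub₁, hcl₁⟩ := h.compl_neighborSet_subset_and_isClique
  obtain ⟨hsub₂, hcl₂⟩ := h.symm.compl_neighborSet_subset_and_isClique
  intro u v huv
  by_cases hu₂ : G.Adj x₂ u <;> by_cases hv₂ : G.Adj x₂ v
  · by_cases hu₁ : G.Adj x₁ u
    · exact exists_properPath_through_edge hc h.1 hu₁.symm hv₂ huv
    by_cases hv₁ : G.Adj x₁ v
    · exact exists_properPath_through_edge hc' h.1.symm hu₂.symm hv₁ huv
    exact exists_properPath_of_adj c (hcl₂ hu₁ hv₁ huv)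
  · exact exists_properPath_through_edge hc' h.1.symm hu₂.symm (hsub₁ hv₂) huv
  · exact exists_properPath_through_edge hc h.1 (hsub₁ hu₂).symm hv₂ huv
  · exact exists_properPath_of_adj c (hcl₁ hu₂ hv₂ huv)

lemma pcOpt_le_of_properlyConnected {c : Sym2 V → ℕ} (hc : ProperlyConnected G c) :
    pcOpt G ≤ numRecolored G c + numNewColors G c :=
  Nat.sInf_le ⟨c, hc, rfl⟩

lemma numRecolored_add_numNewColors_single_edge [DecidableEq V] {a b : V} (hab : G.Adj a b) :
    numRecolored G (fun e => if e = s(a, b) then 1 else 0) +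
      numNewColors G (fun e => if e = s(a, b) then 1 else 0) = 2 := by
  have hrecolored : {e | e ∈ G.edgeSet ∧ (if e = s(a, b) then 1 else 0) ≠ 0} = {s(a, b)} := by
    ext e
    by_cases he : e = s(a, b)
    · simp [he, hab]
    · simp [he]
  rw [numRecolored, numNewColors, hrecolored]
  simp

end

theorem stmt4_general {V : Type*} [Fintype V] [DecidableEq V] (G : SimpleGraph V)
    (x₁ x₂ : V) (h : GoodEdge G x₁ x₂) :
    ProperlyConnected G (fun e => if e = s(x₁, x₂) then 1 else 0) ∧
      (3 ≤ Fintype.card V → pcOpt G ≤ 2) := by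
  have hpc : ProperlyConnected G (fun e => if e = s(x₁, x₂) then 1 else 0) :=
    h.properlyConnected fun e he => by simp [he]
  exact ⟨hpc, fun _ =>
    (pcOpt_le_of_properlyConnected hpc).trans_eq (numRecolored_add_numNewColors_single_edge h.1)⟩

theorem stmt4 {V : Type*} [Fintype V] [DecidableEq V] (G : SimpleGraph V)
    (hconn : G.Connected) (x₁ x₂ : V) (h : GoodEdge G x₁ x₂) :
    ProperlyConnected G (fun e => if e = s(x₁, x₂) then 1 else 0) ∧
      (3 ≤ Fintype.card V → pcOpt G ≤ 2) :=
  stmt4_general G x₁ x₂ h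
end

section
/- Every monochromatic connected graph G with independence number α(G) ≤ 2 satisfies pc_opt(G) ≤ 3. -/
open SimpleGraph

/-!
Pick nonadjacent `u`, `v`. As `α(G) ≤ 2`, the vertices outside a closed neighbourhood `N[w]`
form a clique. Each recolouring uses the single new colour `1` on one edge `st`, or on two
disjoint edges, so every other edge at their endpoints keeps colour `0` and each nonadjacent pair
`x, y` is joined by an alternating path `x - s - t - y` (or `x - s - t - s' - t' - y`).

* If `u`, `v` have no common neighbour, `N[v]` and its complement are cliques; since `G` is
  connected some edge `st` joins them, and recolouring it suffices.
* If `c₀` is a common neighbour and every vertex but `v` lies in `N[u]`, recolour `uc₀`.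
* Otherwise some neighbour `b₀` of `v` lies outside `N[u]`; recolour `uc₀` and `vb₀`. Pairs
  inside `N[v]` go through `vb₀`; a pair `x ∉ N[v]`, `y ∈ N[v]` goes through `uc₀` or `vb₀`,
  or, failing both, along `x - u - c₀ - v - b₀ - y`.

In every case at most two edges get one new colour, so `p + q ≤ 3`.
-/

namespace SimpleGraph

variable {V : Type*} {G : SimpleGraph V} {c : Sym2 V → ℕ}

def closedNeighborSet (G : SimpleGraph V) (v : V) : Set V := insert v (G.neighborSet v)

@[simp]
theorem mem_closedNeighborSet {v w : V} : w ∈ G.closedNeighborSet v ↔ w = v ∨ G.Adj v w :=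
  Iff.rfl

theorem mem_closedNeighborSet_comm {v w : V} :
    w ∈ G.closedNeighborSet v ↔ v ∈ G.closedNeighborSet w := by
  simp [eq_comm, adj_comm]

theorem IsClique.mem_closedNeighborSet {T : Set V} (hT : G.IsClique T) {v w : V}
    (hv : v ∈ T) (hw : w ∈ T) : w ∈ G.closedNeighborSet v := by
  by_cases h : w = v
  · exact .inl h
  · exact .inr (hT hv hw (Ne.symm h))

theorem indepSetFree_three_iff :
    G.IndepSetFree 3 ↔ ∀ a b c : V, a ≠ b → a ≠ c → b ≠ c →
      G.Adj a b ∨ G.Adj a c ∨ G.Adj b c := by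
  classical
  simp only [← cliqueFree_compl, CliqueFree, is3Clique_iff, compl_adj]
  constructor
  · intro h a b c hab hac hbc
    by_contra! hadj
    exact h {a, b, c}
      ⟨a, b, c, ⟨hab, hadj.1⟩, ⟨hac, hadj.2.1⟩, ⟨hbc, hadj.2.2⟩, rfl⟩
  · rintro h _ ⟨a, b, c, ⟨hab, h₁⟩, ⟨hac, h₂⟩, ⟨hbc, h₃⟩, rfl⟩
    rcases h a b c hab hac hbc with h | h | h <;> contradiction

theorem IndepSetFree.adj_of_notMem_closedNeighborSet (hG : G.IndepSetFree 3) {w x y : V}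
    (hx : x ∉ G.closedNeighborSet w) (hy : y ∉ G.closedNeighborSet w) (hxy : x ≠ y) :
    G.Adj x y := by
  simp only [mem_closedNeighborSet, not_or] at hx hy
  rcases indepSetFree_three_iff.mp hG w x y (Ne.symm hx.1) (Ne.symm hy.1) hxy with h | h | h
  exacts [absurd h hx.2, absurd h hy.2, h]

theorem IndepSetFree.mem_closedNeighborSet_of_notMem (hG : G.IndepSetFree 3) {w x y : V}
    (hx : x ∉ G.closedNeighborSet w) (hy : y ∉ G.closedNeighborSet w) :
    y ∈ G.closedNeighborSet x := by
  by_cases h : y = x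
  · exact .inl h
  · exact .inr (hG.adj_of_notMem_closedNeighborSet hx hy (Ne.symm h))

theorem properWalk_iff {u v : V} (p : G.Walk u v) :
    ProperWalk c p ↔ (p.edges.map c).IsChain (· ≠ ·) :=
  Iff.rfl

def ProperlyJoined (G : SimpleGraph V) (c : Sym2 V → ℕ) (x y : V) : Prop :=
  ∃ p : G.Walk x y, p.IsPath ∧ ProperWalk c p

theorem ProperlyJoined.symm {x y : V} (h : ProperlyJoined G c x y) : ProperlyJoined G c y x := by
  obtain ⟨p, hp, hpc⟩ := h
  refine ⟨p.reverse, hp.reverse, ?_⟩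
  rw [properWalk_iff, Walk.edges_reverse, List.map_reverse, List.isChain_reverse]
  exact hpc.imp fun _ _ h => Ne.symm h

theorem ProperlyJoined.of_adj {x y : V} (h : G.Adj x y) : ProperlyJoined G c x y :=
  ⟨.cons h .nil, by simp [h.ne], by simp [properWalk_iff]⟩

theorem properlyConnected_of_forall_not_adj
    (h : ∀ x y, x ≠ y → ¬G.Adj x y → ProperlyJoined G c x y) : ProperlyConnected G c := by
  intro x y hxy
  by_cases hadj : G.Adj x y
  · exact ProperlyJoined.of_adj hadj
  · exact h x y hxy hadj

def ColorIsolated (c : Sym2 V → ℕ) (s t : V) : Prop :=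
  (∀ w, w ≠ t → c s(w, s) ≠ c s(s, t)) ∧ ∀ w, w ≠ s → c s(s, t) ≠ c s(t, w)

noncomputable def recoloring (S : Set (Sym2 V)) : Sym2 V → ℕ := S.indicator 1

theorem colorIsolated_recoloring {S : Set (Sym2 V)} {s t : V} (hst : s(s, t) ∈ S)
    (hS : ∀ e ∈ S, s ∈ e ∨ t ∈ e → e = s(s, t)) : ColorIsolated (recoloring S) s t := by
  have h : ∀ e ∉ S, recoloring S e ≠ recoloring S s(s, t) := by
    intro e he
    simp [recoloring, Set.indicator_of_notMem he, Set.indicator_of_mem hst]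
  refine ⟨fun w hw => h _ fun hmem => hw ?_, fun w hw => (h _ fun hmem => hw ?_).symm⟩
  · have := hS _ hmem (.inl (Sym2.mem_mk_right w s))
    aesop
  · have := hS _ hmem (.inr (Sym2.mem_mk_left t w))
    aesop

theorem properlyJoined_via_edge {s t x y : V} (hst : G.Adj s t) (hc : ColorIsolated c s t)
    (hx : x ∈ G.closedNeighborSet s) (hy : y ∈ G.closedNeighborSet t) (hxy : x ≠ y)
    (hadj : ¬G.Adj x y) : ProperlyJoined G c x y := by
  rw [mem_closedNeighborSet] at hx hy
  have hxt : x ≠ t := by rintro rfl; exact hy.elim (fun h => hxy h.symm) hadj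
  have hys : y ≠ s := by rintro rfl; exact hx.elim hxy fun h => hadj h.symm
  have h₁ := hc.1 x hxt
  have h₂ := hc.2 y hys
  rcases hx with rfl | hsx <;> rcases hy with rfl | hty
  · exact absurd hst hadj
  · exact ⟨.cons hst (.cons hty .nil), by simp [hst.ne, hty.ne, hxy],
      by simp [properWalk_iff, h₂]⟩
  · exact ⟨.cons hsx.symm (.cons hst .nil), by simp [hsx.ne', hst.ne, hxt],
      by simp [properWalk_iff, h₁]⟩
  · exact ⟨.cons hsx.symm (.cons hst (.cons hty .nil)),
      by simp [hsx.ne', hst.ne, hty.ne, hxt, hys.symm, hxy], by simp [properWalk_iff, h₁, h₂]⟩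

theorem properlyJoined_via_two_edges {s t s' t' x y : V} (hst : G.Adj s t) (hts' : G.Adj t s')
    (hs't' : G.Adj s' t') (hc : ColorIsolated c s t) (hc' : ColorIsolated c s' t')
    (hss' : s ≠ s') (hst' : s ≠ t') (htt' : t ≠ t')
    (hx : x ∈ G.closedNeighborSet s) (hy : y ∈ G.closedNeighborSet t')
    (hx' : x ∉ G.closedNeighborSet s') (hy' : y ∉ G.closedNeighborSet t)
    (hxy : x ≠ y) (hadj : ¬G.Adj x y) : ProperlyJoined G c x y := by
  simp only [mem_closedNeighborSet, not_or] at hx hy hx' hy'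
  have hxt : x ≠ t := by rintro rfl; exact hx'.2 hts'.symm
  have hxt' : x ≠ t' := by rintro rfl; exact hy.elim (fun h => hxy h.symm) hadj
  have hyt : y ≠ t := hy'.1
  have hys' : y ≠ s' := by rintro rfl; exact hy'.2 hts'
  have hys : y ≠ s := by rintro rfl; exact hx.elim hxy fun h => hadj h.symm
  have h₁ := hc.1 x hxt
  have h₂ := hc.2 s' (Ne.symm hss')
  have h₃ := hc'.1 t htt'
  have h₄ := hc'.2 y hys'
  rcases hx with rfl | hsx <;> rcases hy with rfl | hty
  · exact ⟨.cons hst (.cons hts' (.cons hs't' .nil)),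
      by simp [hst.ne, hts'.ne, hs't'.ne, hss', hst', htt'], by simp [properWalk_iff, h₂, h₃]⟩
  · exact ⟨.cons hst (.cons hts' (.cons hs't' (.cons hty .nil))),
      by simp [hst.ne, hts'.ne, hs't'.ne, hty.ne, hss', hst', htt', hxy, hyt.symm, hys'.symm],
      by simp [properWalk_iff, h₂, h₃, h₄]⟩
  · exact ⟨.cons hsx.symm (.cons hst (.cons hts' (.cons hs't' .nil))),
      by simp [hsx.ne', hst.ne, hts'.ne, hs't'.ne, hss', hst', htt', hxt, hx'.1, hxt'],
      by simp [properWalk_iff, h₁, h₂, h₃]⟩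
  · exact ⟨.cons hsx.symm (.cons hst (.cons hts' (.cons hs't' (.cons hty .nil)))),
      by simp [hsx.ne', hst.ne, hts'.ne, hs't'.ne, hty.ne, hss', hst', htt', hxt, hx'.1, hxt',
        hxy, hys.symm, hyt.symm, hys'.symm],
      by simp [properWalk_iff, h₁, h₂, h₃, h₄]⟩

theorem properlyJoined_of_mem_closedNeighborSet (hG : G.IndepSetFree 3) {s t x y : V}
    (hst : G.Adj s t) (hc : ColorIsolated c s t) (hx : x ∈ G.closedNeighborSet s)
    (hy : y ∈ G.closedNeighborSet s) (hxy : x ≠ y) (hadj : ¬G.Adj x y) :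
    ProperlyJoined G c x y := by
  by_cases hyt : y ∈ G.closedNeighborSet t
  · exact properlyJoined_via_edge hst hc hx hyt hxy hadj
  by_cases hxt : x ∈ G.closedNeighborSet t
  · exact (properlyJoined_via_edge hst hc hy hxt (Ne.symm hxy) fun h => hadj h.symm).symm
  exact absurd (hG.adj_of_notMem_closedNeighborSet hxt hyt hxy) hadj

theorem exists_properlyConnected_recoloring_singleton_of_isClique (hconn : G.Connected) {T : Set V}
    (hT : G.IsClique T) (hT' : G.IsClique Tᶜ) {u v : V} (hv : v ∈ T) (hu : u ∉ T) :
    ∃ e, ProperlyConnected G (recoloring {e}) := by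
  obtain ⟨d, -, hd, hd'⟩ := (hconn.preconnected v u).some.exists_boundary_dart T hv hu
  refine ⟨s(d.snd, d.fst), properlyConnected_of_forall_not_adj fun x y hxy hadj => ?_⟩
  have hc : ColorIsolated (recoloring {s(d.snd, d.fst)}) d.snd d.fst :=
    colorIsolated_recoloring rfl fun e he _ => he
  have cross : ∀ x y, x ≠ y → ¬G.Adj x y → x ∉ T → y ∈ T →
      ProperlyJoined G (recoloring {s(d.snd, d.fst)}) x y := fun x y hxy hadj hx hy =>
    properlyJoined_via_edge d.adj.symm hc (hT'.mem_closedNeighborSet hd' hx)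
      (hT.mem_closedNeighborSet hd hy) hxy hadj
  by_cases hx : x ∈ T <;> by_cases hy : y ∈ T
  · exact absurd (hT hx hy hxy) hadj
  · exact (cross y x (Ne.symm hxy) (fun h => hadj h.symm) hy hx).symm
  · exact cross x y hxy hadj hx hy
  · exact absurd (hT' hx hy hxy) hadj

theorem properlyConnected_recoloring_of_subset_closedNeighborSet (hG : G.IndepSetFree 3)
    {s t v : V} (hst : G.Adj s t) (hv : v ∈ G.closedNeighborSet t)
    (hs : ∀ w, w ≠ v → w ∈ G.closedNeighborSet s) :
    ProperlyConnected G (recoloring {s(s, t)}) := by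
  have hc : ColorIsolated (recoloring {s(s, t)}) s t :=
    colorIsolated_recoloring rfl fun e he _ => he
  refine properlyConnected_of_forall_not_adj fun x y hxy hadj => ?_
  by_cases hxv : x = v
  · subst hxv
    exact (properlyJoined_via_edge hst hc (hs y (Ne.symm hxy)) hv (Ne.symm hxy)
      fun h => hadj h.symm).symm
  by_cases hyv : y = v
  · subst hyv
    exact properlyJoined_via_edge hst hc (hs x hxy) hv hxy hadj
  exact properlyJoined_of_mem_closedNeighborSet hG hst hc (hs x hxv) (hs y hyv) hxy hadj

theorem properlyConnected_recoloring_pair (hG : G.IndepSetFree 3) {u v c₀ b₀ : V}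
    (hu : u ∉ G.closedNeighborSet v) (hc₀u : G.Adj u c₀) (hc₀v : G.Adj c₀ v)
    (hb₀v : G.Adj v b₀) (hb₀u : b₀ ∉ G.closedNeighborSet u) :
    ProperlyConnected G (recoloring {s(u, c₀), s(v, b₀)}) := by
  have huv : u ≠ v := fun h => hu (.inl h)
  have hub : u ≠ b₀ := fun h => hb₀u (.inl h.symm)
  have hcb : c₀ ≠ b₀ := by rintro rfl; exact hb₀u (.inr hc₀u)
  have hc₁ : ColorIsolated (recoloring {s(u, c₀), s(v, b₀)}) u c₀ :=
    colorIsolated_recoloring (by simp) (by simp [huv, hub, hc₀v.ne, hcb])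
  have hc₂ : ColorIsolated (recoloring {s(u, c₀), s(v, b₀)}) v b₀ :=
    colorIsolated_recoloring (by simp) (by simp [Ne.symm huv, hc₀v.ne', hub.symm, hcb.symm])
  have cross : ∀ x y, x ≠ y → ¬G.Adj x y → x ∉ G.closedNeighborSet v →
      y ∈ G.closedNeighborSet v →
      ProperlyJoined G (recoloring {s(u, c₀), s(v, b₀)}) x y := by
    intro x y hxy hadj hx hy
    have hxu : x ∈ G.closedNeighborSet u := hG.mem_closedNeighborSet_of_notMem hu hx
    by_cases hyc : y ∈ G.closedNeighborSet c₀
    · exact properlyJoined_via_edge hc₀u hc₁ hxu hyc hxy hadj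
    by_cases hxb : x ∈ G.closedNeighborSet b₀
    · exact (properlyJoined_via_edge hb₀v hc₂ hy hxb (Ne.symm hxy) fun h => hadj h.symm).symm
    have hyb : y ∈ G.closedNeighborSet b₀ :=
      hG.mem_closedNeighborSet_of_notMem (mem_closedNeighborSet_comm.not.mp hxb)
        (by simp [Ne.symm hxy, hadj])
    exact properlyJoined_via_two_edges hc₀u hc₀v hb₀v hc₁ hc₂ huv hub hcb hxu hyb hx hyc hxy
      hadj
  refine properlyConnected_of_forall_not_adj fun x y hxy hadj => ?_
  by_cases hx : x ∈ G.closedNeighborSet v <;> by_cases hy : y ∈ G.closedNeighborSet v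
  · exact properlyJoined_of_mem_closedNeighborSet hG hb₀v hc₂ hx hy hxy hadj
  · exact (cross y x (Ne.symm hxy) (fun h => hadj h.symm) hy hx).symm
  · exact cross x y hxy hadj hx hy
  · exact absurd (hG.adj_of_notMem_closedNeighborSet hx hy hxy) hadj

theorem isClique_compl_closedNeighborSet (hG : G.IndepSetFree 3) (v : V) :
    G.IsClique (G.closedNeighborSet v)ᶜ :=
  fun _ hx _ hy hxy => hG.adj_of_notMem_closedNeighborSet hx hy hxy

theorem isClique_closedNeighborSet (hG : G.IndepSetFree 3) {u v : V}
    (hu : u ∉ G.closedNeighborSet v) (h : ∀ w, ¬(G.Adj u w ∧ G.Adj w v)) :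
    G.IsClique (G.closedNeighborSet v) := by
  have hN : ∀ x, G.Adj v x → x ∉ G.closedNeighborSet u := by
    rintro x hvx (rfl | hux)
    exacts [hu (.inr hvx), h x ⟨hux, hvx.symm⟩]
  rintro x (rfl | hvx) y (rfl | hvy) hxy
  exacts [absurd rfl hxy, hvy, hvx.symm,
    hG.adj_of_notMem_closedNeighborSet (hN x hvx) (hN y hvy) hxy]

theorem exists_properlyConnected_recoloring (hconn : G.Connected) (hG : G.IndepSetFree 3) :
    ∃ S : Set (Sym2 V), S.Finite ∧ S.ncard ≤ 2 ∧ ProperlyConnected G (recoloring S) := by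
  by_cases hcomplete : ∀ u v : V, u ∈ G.closedNeighborSet v
  · refine ⟨∅, Set.finite_empty, by simp, properlyConnected_of_forall_not_adj ?_⟩
    intro x y hxy hadj
    exact absurd ((hcomplete y x).resolve_left (Ne.symm hxy)) hadj
  push Not at hcomplete
  obtain ⟨u, v, hu⟩ := hcomplete
  by_cases hc : ∃ c₀, G.Adj u c₀ ∧ G.Adj c₀ v
  · obtain ⟨c₀, hc₀u, hc₀v⟩ := hc
    by_cases hb : ∃ b₀, G.Adj v b₀ ∧ b₀ ∉ G.closedNeighborSet u
    · obtain ⟨b₀, hb₀v, hb₀u⟩ := hb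
      refine ⟨_, Set.toFinite _, (Set.ncard_insert_le _ _).trans (by simp),
        properlyConnected_recoloring_pair hG hu hc₀u hc₀v hb₀v hb₀u⟩
    push Not at hb
    refine ⟨_, Set.toFinite _, by simp, properlyConnected_recoloring_of_subset_closedNeighborSet
      hG hc₀u (.inr hc₀v) fun w hw => ?_⟩
    by_contra hwu
    exact hwu (hb w (hG.adj_of_notMem_closedNeighborSet (mem_closedNeighborSet_comm.not.mp hu)
      hwu (Ne.symm hw)))
  obtain ⟨e, he⟩ := exists_properlyConnected_recoloring_singleton_of_isClique hconn
    (isClique_closedNeighborSet hG hu (not_exists.mp hc))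
    (isClique_compl_closedNeighborSet hG v) (.inl rfl) hu
  exact ⟨_, Set.toFinite _, by simp, he⟩

end SimpleGraph

theorem pcOpt_le {V : Type*} {G : SimpleGraph V} {c : Sym2 V → ℕ} (h : ProperlyConnected G c) :
    pcOpt G ≤ numRecolored G c + numNewColors G c :=
  Nat.sInf_le ⟨c, h, rfl⟩

theorem pcOpt_le_ncard_add_one {V : Type*} {G : SimpleGraph V} {S : Set (Sym2 V)}
    (hS : S.Finite) (h : ProperlyConnected G (recoloring S)) : pcOpt G ≤ S.ncard + 1 := by
  have hsupp : {e | e ∈ G.edgeSet ∧ recoloring S e ≠ 0} ⊆ S :=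
    fun e he => Set.mem_of_indicator_ne_zero he.2
  have himage : recoloring S '' {e | e ∈ G.edgeSet ∧ recoloring S e ≠ 0} ⊆ {1} := by
    rintro _ ⟨e, he, rfl⟩
    simp [recoloring, Set.indicator_of_mem (hsupp he)]
  calc pcOpt G ≤ numRecolored G (recoloring S) + numNewColors G (recoloring S) := pcOpt_le h
    _ ≤ S.ncard + ({1} : Set ℕ).ncard :=
        add_le_add (Set.ncard_le_ncard hsupp hS)
          (Set.ncard_le_ncard himage (Set.finite_singleton 1))
    _ = S.ncard + 1 := by rw [Set.ncard_singleton]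

theorem stmt8_general {V : Type*} (G : SimpleGraph V) (hconn : G.Connected)
    (halpha : ∀ a b c : V, a ≠ b → a ≠ c → b ≠ c →
      G.Adj a b ∨ G.Adj a c ∨ G.Adj b c) :
    pcOpt G ≤ 3 := by
  obtain ⟨S, hS, hS₂, h⟩ :=
    exists_properlyConnected_recoloring hconn (indepSetFree_three_iff.mpr halpha)
  calc pcOpt G ≤ S.ncard + 1 := pcOpt_le_ncard_add_one hS h
    _ ≤ 3 := by omega

theorem stmt8 {V : Type*} [Fintype V] (G : SimpleGraph V) (hconn : G.Connected)
    (halpha : ∀ a b c : V, a ≠ b → a ≠ c → b ≠ c →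
      G.Adj a b ∨ G.Adj a c ∨ G.Adj b c) :
    pcOpt G ≤ 3 :=
  stmt8_general G hconn halpha
end

section
/- In the complete bipartite graph K_{m,n} (m ≥ n ≥ 2, m+n ≥ 9) with all edges colored 0, no recoloring of at most two edges with a single new color makes the graph properly connected. -/
open SimpleGraph

/-!
With only two colors, the colors along a proper walk alternate. Each recolored edge has one
endpoint on the side `Fin m`, which has at least five vertices, so some two vertices `u ≠ v`
there meet only edges of color `0`. A proper path from `u` to `v` then begins and ends with
color `0`, so its length is odd; but `u` and `v` lie on the same side of a bipartite graph,
so every walk between them has even length.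
-/

namespace ProperWalk

variable {V : Type*} {G : SimpleGraph V} {c : Sym2 V → ℕ}

lemma of_cons {u w v : V} {h : G.Adj u w} {p : G.Walk w v} (hp : ProperWalk c (.cons h p)) :
    ProperWalk c p :=
  hp.tail

lemma cons_color_eq_zero_iff (hval : ∀ e, c e = 0 ∨ c e = 1) {v : V}
    (hv : ∀ w, G.Adj v w → c s(v, w) = 0) {u w : V} (h : G.Adj u w) (p : G.Walk w v)
    (hp : ProperWalk c (.cons h p)) : c s(u, w) = 0 ↔ Even p.length := by
  induction p generalizing u with
  | nil => simpa [Sym2.eq_swap] using hv u h.symm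
  | @cons w x _ h' q ih =>
    have hne : c s(u, w) ≠ c s(w, x) := by
      simpa [ProperWalk] using (List.isChain_cons_cons.mp hp).1
    rw [Walk.length_cons, Nat.even_add_one, ← ih hv h' hp.of_cons]
    rcases hval s(u, w) with h₁ | h₁ <;> rcases hval s(w, x) with h₂ | h₂ <;> simp_all

lemma odd_length (hval : ∀ e, c e = 0 ∨ c e = 1) {u v : V}
    (hu : ∀ w, G.Adj u w → c s(u, w) = 0) (hv : ∀ w, G.Adj v w → c s(v, w) = 0) (huv : u ≠ v)
    {p : G.Walk u v} (hp : ProperWalk c p) : Odd p.length := by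
  cases p with
  | nil => exact absurd rfl huv
  | cons h q =>
    rw [Walk.length_cons, Nat.odd_add_one, Nat.not_odd_iff_even]
    exact (cons_color_eq_zero_iff hval hv h q hp).1 (hu _ h)

end ProperWalk

lemma Set.exists_pair_notMem_of_ncard_add_two_le {α : Type*} [Finite α] {s : Set α}
    (h : s.ncard + 2 ≤ Nat.card α) : ∃ u v, u ≠ v ∧ u ∉ s ∧ v ∉ s := by
  have := s.ncard_add_ncard_compl
  obtain ⟨u, v, hu, hv, huv⟩ := (Set.one_lt_ncard_iff).1 (by omega : 1 < sᶜ.ncard)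
  exact ⟨u, v, huv, hu, hv⟩

section completeBipartiteGraph

variable {α β : Type*}

lemma even_length_of_inl_inl {a a' : α}
    (p : (completeBipartiteGraph α β).Walk (.inl a) (.inl a')) : Even p.length :=
  ((CompleteBipartiteGraph.bicoloring α β).even_length_iff_congr p).2 Iff.rfl

lemma ncard_inl_incident_color_le [Finite α] [Finite β] (c : Sym2 (α ⊕ β) → ℕ) (k : ℕ) :
    {a : α | ∃ w, (completeBipartiteGraph α β).Adj (.inl a) w ∧ c s(.inl a, w) = k}.ncard ≤
      {e | e ∈ (completeBipartiteGraph α β).edgeSet ∧ c e = k}.ncard := by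
  set P := {x : α × β | c s(.inl x.1, .inr x.2) = k}
  calc _ ≤ (Prod.fst '' P).ncard := Set.ncard_le_ncard ?_ (Set.toFinite _)
    _ ≤ P.ncard := Set.ncard_image_le (Set.toFinite _)
    _ ≤ _ := Set.ncard_le_ncard_of_injOn (fun x ↦ s(.inl x.1, .inr x.2)) ?_ ?_ (Set.toFinite _)
  · rintro a ⟨_ | b, hadj, hk⟩
    · simp at hadj
    · exact ⟨(a, b), hk, rfl⟩
  · exact fun x hx ↦ ⟨by simp, hx⟩
  · intro x _ y _ hxy
    simpa [Prod.ext_iff] using hxy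

end completeBipartiteGraph

theorem stmt10_general (m n : ℕ) (hmn : n ≤ m) (h9 : 9 ≤ m + n)
    (c : Sym2 (Fin m ⊕ Fin n) → ℕ) (hval : ∀ e, c e = 0 ∨ c e = 1)
    (hcount :
      {e | e ∈ (completeBipartiteGraph (Fin m) (Fin n)).edgeSet ∧ c e = 1}.ncard ≤ 2) :
    ¬ ProperlyConnected (completeBipartiteGraph (Fin m) (Fin n)) c := by
  have hbad := ncard_inl_incident_color_le c 1
  set G := completeBipartiteGraph (Fin m) (Fin n)
  set bad := {a : Fin m | ∃ w, G.Adj (.inl a) w ∧ c s(.inl a, w) = 1}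
  have zero_of_notMem {a : Fin m} (ha : a ∉ bad) (w) (hw : G.Adj (.inl a) w) :
      c s(.inl a, w) = 0 :=
    (hval _).resolve_right fun h ↦ ha ⟨w, hw, h⟩
  obtain ⟨u, v, huv, hu, hv⟩ : ∃ u v, u ≠ v ∧ u ∉ bad ∧ v ∉ bad :=
    Set.exists_pair_notMem_of_ncard_add_two_le (by rw [Nat.card_fin]; omega)
  intro hPC
  obtain ⟨p, -, hp⟩ := hPC (.inl u) (.inl v) (by simpa)
  exact Nat.not_odd_iff_even.2 (even_length_of_inl_inl p)
    (hp.odd_length hval (zero_of_notMem hu) (zero_of_notMem hv) (by simpa))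

theorem stmt10 (m n : ℕ) (hmn : n ≤ m) (hn : 2 ≤ n) (h9 : 9 ≤ m + n)
    (c : Sym2 (Fin m ⊕ Fin n) → ℕ) (hval : ∀ e, c e = 0 ∨ c e = 1)
    (hcount :
      {e | e ∈ (completeBipartiteGraph (Fin m) (Fin n)).edgeSet ∧ c e = 1}.ncard ≤ 2) :
    ¬ ProperlyConnected (completeBipartiteGraph (Fin m) (Fin n)) c :=
  stmt10_general m n hmn h9 c hval hcount
end

section
/- For every tree T on n ≥ 2 vertices, pc_opt(T) = n − 2 − α'(T) + Δ(T), where α'(T) is the maximum matching size and Δ(T) is the maximum degree. -/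
open SimpleGraph

/-- Maximum matching size. -/
noncomputable def matchingNum {V : Type*} (G : SimpleGraph V) : ℕ :=
  sSup { n | ∃ M : SimpleGraph.Subgraph G, M.IsMatching ∧ n = M.edgeSet.ncard }

/-- Maximum degree. -/
noncomputable def maxDeg {V : Type*} (G : SimpleGraph V) : ℕ :=
  sSup { d | ∃ v : V, d = (G.neighborSet v).ncard }

/-!
In a tree the only path between the far ends of two adjacent edges is that pair of edges, so
a properly connected coloring is a proper edge coloring. Its color-0 edges then form a
matching, so at least `|E| - α'` edges are recolored, and the `Δ` edges at a vertex of maximum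
degree carry `Δ - 1` new colors.

Conversely, root the tree at `r`. Among maximum matchings, one minimizing the sum of
`n - dist r v` over the uncovered vertices `v` of maximum degree covers all of them: if `x` is
such a vertex, a child `u` of `x` is matched (by maximality) to a child `w` of `u`, and replacing
`uw` by `xu` moves the hole two levels down. Coloring this matching `0` leaves a forest of
maximum degree `Δ - 1`, which is properly edge-colored with `Δ - 1` new colors by peeling off
leaves.
-/

lemma Finset.sum_lt_sum_of_subset_insert_erase {ι : Type*} [DecidableEq ι] {s t : Finset ι}
    {f : ι → ℕ} {a b : ι} (ha : a ∈ s) (hts : t ⊆ insert b (s.erase a)) (hf : f b < f a) :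
    ∑ i ∈ t, f i < ∑ i ∈ s, f i :=
  calc ∑ i ∈ t, f i ≤ ∑ i ∈ insert b (s.erase a), f i := Finset.sum_le_sum_of_subset hts
    _ ≤ f b + ∑ i ∈ s.erase a, f i := by
      by_cases hb : b ∈ s.erase a
      · rw [Finset.insert_eq_of_mem hb]
        omega
      · rw [Finset.sum_insert hb]
    _ < f a + ∑ i ∈ s.erase a, f i := by omega
    _ = ∑ i ∈ s, f i := Finset.add_sum_erase s f ha

namespace SimpleGraph

variable {V : Type*} {G : SimpleGraph V} {c : Sym2 V → ℕ}

lemma ncard_neighborSet_le_maxDeg [Finite V] (G : SimpleGraph V) (v : V) :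
    (G.neighborSet v).ncard ≤ maxDeg G :=
  le_csSup ⟨Nat.card V, by rintro _ ⟨w, rfl⟩; exact Set.ncard_le_card _⟩ ⟨v, rfl⟩

lemma maxDeg_le {k : ℕ} (h : ∀ v, (G.neighborSet v).ncard ≤ k) : maxDeg G ≤ k :=
  csSup_le' (by rintro _ ⟨v, rfl⟩; exact h v)

lemma maxDeg_pos [Finite V] (hE : G.edgeSet.Nonempty) : 0 < maxDeg G := by
  obtain ⟨e, he⟩ := hE
  induction e using Sym2.ind with
  | _ a b =>
    have hb : (G.neighborSet a).Nonempty := ⟨b, he⟩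
    exact hb.ncard_pos.trans_le (G.ncard_neighborSet_le_maxDeg a)

lemma IsTree.ncard_edgeSet_add_one [Fintype V] (hG : G.IsTree) :
    G.edgeSet.ncard + 1 = Fintype.card V := by
  classical
  rw [← hG.card_edgeFinset, Set.ncard_eq_toFinset_card', edgeFinset]

-- Matchings as edge sets rather than `Subgraph`s, which makes swapping edges in and out easy.
def IsEdgeMatching (G : SimpleGraph V) (M : Set (Sym2 V)) : Prop :=
  M ⊆ G.edgeSet ∧ ∀ e ∈ M, ∀ f ∈ M, ∀ v ∈ e, v ∈ f → e = f

def coveredVerts (M : Set (Sym2 V)) : Set V := {v | ∃ e ∈ M, v ∈ e}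

lemma coveredVerts_mono {M N : Set (Sym2 V)} (h : M ⊆ N) : coveredVerts M ⊆ coveredVerts N :=
  fun _ ⟨e, he, hv⟩ => ⟨e, h he, hv⟩

lemma Subgraph.IsMatching.isEdgeMatching {N : G.Subgraph} (hN : N.IsMatching) :
    IsEdgeMatching G N.edgeSet := by
  refine ⟨N.edgeSet_subset, fun e he f hf v hve hvf => ?_⟩
  obtain ⟨a, rfl⟩ := Sym2.mem_iff_exists.mp hve
  obtain ⟨b, rfl⟩ := Sym2.mem_iff_exists.mp hvf
  rw [hN.eq_of_adj_left (Subgraph.mem_edgeSet.1 he) (Subgraph.mem_edgeSet.1 hf)]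

namespace IsEdgeMatching

variable {M : Set (Sym2 V)}

lemma mono (hM : IsEdgeMatching G M) {N : Set (Sym2 V)} (hNM : N ⊆ M) : IsEdgeMatching G N :=
  ⟨hNM.trans hM.1, fun e he f hf => hM.2 e (hNM he) f (hNM hf)⟩

lemma eq_of_mem (hM : IsEdgeMatching G M) {v a b : V} (ha : s(v, a) ∈ M) (hb : s(v, b) ∈ M) :
    a = b :=
  Sym2.congr_right.mp (hM.2 _ ha _ hb v (Sym2.mem_mk_left v a) (Sym2.mem_mk_left v b))

protected lemma insert (hM : IsEdgeMatching G M) {x u : V} (hxu : G.Adj x u)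
    (hx : x ∉ coveredVerts M) (hu : u ∉ coveredVerts M) :
    IsEdgeMatching G (insert s(x, u) M) := by
  have disjoint : ∀ f ∈ M, ∀ v ∈ s(x, u), v ∉ f := by
    rintro f hf v hv hvf
    rcases Sym2.mem_iff.1 hv with rfl | rfl
    exacts [hx ⟨f, hf, hvf⟩, hu ⟨f, hf, hvf⟩]
  refine ⟨Set.insert_subset hxu hM.1, ?_⟩
  rintro e (rfl | he) f (rfl | hf) v hve hvf
  · rfl
  · exact absurd hvf (disjoint f hf v hve)
  · exact absurd hve (disjoint e he v hvf)
  · exact hM.2 e he f hf v hve hvf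

lemma exists_subgraph (hM : IsEdgeMatching G M) :
    ∃ N : G.Subgraph, N.IsMatching ∧ N.edgeSet = M := by
  refine ⟨{ verts := coveredVerts M
            Adj := fun u v => s(u, v) ∈ M
            adj_sub := fun h => hM.1 h
            edge_vert := fun h => ⟨_, h, Sym2.mem_mk_left _ _⟩
            symm := ⟨fun u v h => by rwa [Sym2.eq_swap]⟩ }, ?_, ?_⟩
  · rintro v ⟨e, he, hv⟩
    obtain ⟨w, rfl⟩ := Sym2.mem_iff_exists.mp hv
    exact ⟨w, he, fun y hy => hM.eq_of_mem hy he⟩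
  · ext e
    induction e using Sym2.ind
    rfl

end IsEdgeMatching

lemma matchingNum_eq_sSup :
    matchingNum G = sSup {n | ∃ M, IsEdgeMatching G M ∧ n = M.ncard} := by
  refine congrArg sSup (Set.ext fun n => ⟨?_, ?_⟩)
  · rintro ⟨N, hN, rfl⟩
    exact ⟨_, hN.isEdgeMatching, rfl⟩
  · rintro ⟨M, hM, rfl⟩
    obtain ⟨N, hN, rfl⟩ := hM.exists_subgraph
    exact ⟨N, hN, rfl⟩

lemma bddAbove_ncard_isEdgeMatching [Finite V] :
    BddAbove {n | ∃ M, IsEdgeMatching G M ∧ n = M.ncard} :=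
  ⟨G.edgeSet.ncard, by rintro _ ⟨M, hM, rfl⟩; exact Set.ncard_le_ncard hM.1⟩

lemma IsEdgeMatching.ncard_le_matchingNum [Finite V] {M : Set (Sym2 V)}
    (hM : IsEdgeMatching G M) : M.ncard ≤ matchingNum G :=
  matchingNum_eq_sSup (G := G) ▸ le_csSup bddAbove_ncard_isEdgeMatching ⟨M, hM, rfl⟩

lemma exists_isEdgeMatching_ncard_eq_matchingNum [Finite V] (G : SimpleGraph V) :
    ∃ M, IsEdgeMatching G M ∧ M.ncard = matchingNum G := by
  have hne : {n | ∃ M, IsEdgeMatching G M ∧ n = M.ncard}.Nonempty :=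
    ⟨0, ∅, ⟨Set.empty_subset _, by simp⟩, by simp⟩
  obtain ⟨M, hM, hcard⟩ := Nat.sSup_mem hne bddAbove_ncard_isEdgeMatching
  exact ⟨M, hM, by rw [matchingNum_eq_sSup, hcard]⟩

def IsProperEdgeColoring (G : SimpleGraph V) (c : Sym2 V → ℕ) : Prop :=
  ∀ ⦃a b d : V⦄, G.Adj a b → G.Adj b d → a ≠ d → c s(a, b) ≠ c s(b, d)

lemma IsProperEdgeColoring.properWalk (hc : IsProperEdgeColoring G c) {u v : V}
    (p : G.Walk u v) (hp : p.IsPath) : ProperWalk c p := by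
  induction p with
  | nil => exact List.isChain_nil
  | @cons a b _ h q ih =>
    cases q with
    | nil => exact List.isChain_singleton _
    | @cons _ d _ h' r =>
      have had : a ≠ d := fun had => ((Walk.cons_isPath_iff _ _).1 hp).2 <| by
        rw [had, Walk.support_cons]
        exact List.mem_cons_of_mem _ r.start_mem_support
      exact List.isChain_cons_cons.2 ⟨hc h h' had, ih hp.of_cons⟩

lemma IsProperEdgeColoring.properlyConnected (hc : IsProperEdgeColoring G c)
    (hG : G.Connected) : ProperlyConnected G c := fun u v _ =>
  let ⟨p, hp⟩ := hG.exists_isPath u v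
  ⟨p, hp, hc.properWalk p hp⟩

lemma ProperlyConnected.isProperEdgeColoring (hc : ProperlyConnected G c) (hG : G.IsAcyclic) :
    IsProperEdgeColoring G c := by
  intro a b d hab hbd had
  have hpath : (Walk.cons hab (Walk.cons hbd Walk.nil)).IsPath := by
    simp [Walk.cons_isPath_iff, hab.ne, hbd.ne, had]
  obtain ⟨p, hp, hpc⟩ := hc a d had
  obtain rfl : p = Walk.cons hab (Walk.cons hbd Walk.nil) :=
    congrArg Subtype.val ((hG.subsingleton_path a d).elim ⟨p, hp⟩ ⟨_, hpath⟩)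
  exact (List.isChain_cons_cons.1 hpc).1

lemma IsProperEdgeColoring.isEdgeMatching_zero (hc : IsProperEdgeColoring G c) :
    IsEdgeMatching G {e | e ∈ G.edgeSet ∧ c e = 0} := by
  refine ⟨fun e he => he.1, ?_⟩
  rintro e ⟨he, hce⟩ f ⟨hf, hcf⟩ v hve hvf
  obtain ⟨a, rfl⟩ := Sym2.mem_iff_exists.mp hve
  obtain ⟨b, rfl⟩ := Sym2.mem_iff_exists.mp hvf
  by_contra hne
  have hab : a ≠ b := fun h => hne (h ▸ rfl)
  exact hc (G.adj_symm he) hf hab (by rw [Sym2.eq_swap, hce, hcf])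

lemma numRecolored_add_ncard_zero [Finite V] (G : SimpleGraph V) (c : Sym2 V → ℕ) :
    numRecolored G c + {e | e ∈ G.edgeSet ∧ c e = 0}.ncard = G.edgeSet.ncard := by
  have : {e | e ∈ G.edgeSet ∧ c e ≠ 0} = G.edgeSet \ {e | e ∈ G.edgeSet ∧ c e = 0} := by
    ext e
    simp only [Set.mem_ofPred_eq, Set.mem_sdiff]
    tauto
  rw [numRecolored, this]
  exact Set.ncard_sdiff_add_ncard_of_subset fun e he => he.1

lemma IsProperEdgeColoring.ncard_neighborSet_le_numNewColors_add_one [Finite V]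
    (hc : IsProperEdgeColoring G c) (v : V) :
    (G.neighborSet v).ncard ≤ numNewColors G c + 1 := by
  have hinj : Set.InjOn (fun w => c s(v, w)) (G.neighborSet v) := by
    intro a ha b hb hab
    by_contra hne
    exact hc (G.adj_symm ha) hb hne (by rwa [Sym2.eq_swap])
  have hsub : (fun w => c s(v, w)) '' G.neighborSet v ⊆
      insert 0 (c '' {e | e ∈ G.edgeSet ∧ c e ≠ 0}) := by
    rintro _ ⟨w, hw, rfl⟩
    by_cases h0 : c s(v, w) = 0
    · exact Or.inl h0
    · exact Or.inr ⟨_, ⟨hw, h0⟩, rfl⟩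
  calc (G.neighborSet v).ncard = ((fun w => c s(v, w)) '' G.neighborSet v).ncard :=
        hinj.ncard_image.symm
    _ ≤ (insert 0 (c '' {e | e ∈ G.edgeSet ∧ c e ≠ 0})).ncard := Set.ncard_le_ncard hsub
    _ ≤ numNewColors G c + 1 := Set.ncard_insert_le _ _

lemma ProperlyConnected.ncard_edgeSet_add_maxDeg_le [Finite V] (hc : ProperlyConnected G c)
    (hG : G.IsAcyclic) :
    G.edgeSet.ncard + maxDeg G ≤ numRecolored G c + numNewColors G c + matchingNum G + 1 := by
  have hproper := hc.isProperEdgeColoring hG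
  have hedges := numRecolored_add_ncard_zero G c
  have hzero := hproper.isEdgeMatching_zero.ncard_le_matchingNum
  have hdeg := maxDeg_le hproper.ncard_neighborSet_le_numNewColors_add_one
  omega

lemma IsAcyclic.exists_adj_forall_adj_eq [Finite V] (hG : G.IsAcyclic)
    (hE : G.edgeSet.Nonempty) : ∃ x u, G.Adj x u ∧ ∀ w, G.Adj x w → w = u := by
  obtain ⟨e, he⟩ := hE
  induction e using Sym2.ind with
  | _ a b =>
  have : Nonempty V := ⟨a⟩
  obtain ⟨x, y, p, hp, hmax⟩ := Walk.exists_isPath_forall_isPath_length_le_length G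
  have hlen : 1 ≤ p.length :=
    hmax _ _ _ (Walk.IsPath.nil.cons (u := a) (by simpa using he.ne) (h := he))
  have hnil : ¬p.Nil := fun h => by simp [Walk.length_eq_zero_iff.2 h] at hlen
  refine ⟨x, p.snd, p.adj_snd hnil, fun w hw => hG.eq_snd_of_adj_start hp hw ?_⟩
  by_contra hw'
  have := hmax _ _ _ (hp.cons hw' (h := hw.symm))
  simp at this

lemma IsProperEdgeColoring.update_of_leaf [DecidableEq V] {x u : V} {γ : ℕ}
    (hleaf : ∀ w, G.Adj x w → w = u)
    (hc : IsProperEdgeColoring (G.deleteEdges {s(x, u)}) c)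
    (hγ : ∀ w, (G.deleteEdges {s(x, u)}).Adj u w → c s(u, w) ≠ γ) :
    IsProperEdgeColoring G (Function.update c s(x, u) γ) := by
  have at_leaf : ∀ ⦃a b d⦄, G.Adj b d → a ≠ d → s(a, b) = s(x, u) →
      (G.deleteEdges {s(x, u)}).Adj u d ∧ b = u := by
    intro a b d hbd had he
    rcases Sym2.eq_iff.1 he with ⟨rfl, rfl⟩ | ⟨rfl, rfl⟩
    · refine ⟨deleteEdges_adj.2 ⟨hbd, fun h => had ?_⟩, rfl⟩
      rcases Sym2.eq_iff.1 (Set.mem_singleton_iff.1 h) with ⟨-, rfl⟩ | ⟨-, rfl⟩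
      · exact absurd rfl hbd.ne
      · rfl
    · exact absurd (hleaf d hbd).symm had
  intro a b d hab hbd had
  by_cases h₁ : s(a, b) = s(x, u)
  · obtain ⟨hud, rfl⟩ := at_leaf hbd had h₁
    rw [h₁, Function.update_self, Function.update_of_ne (deleteEdges_adj.1 hud).2]
    exact (hγ d hud).symm
  by_cases h₂ : s(b, d) = s(x, u)
  · obtain ⟨hua, rfl⟩ := at_leaf hab.symm had.symm (by rwa [Sym2.eq_swap])
    rw [h₂, Function.update_self, Function.update_of_ne h₁, Sym2.eq_swap]
    exact hγ a hua
  rw [Function.update_of_ne h₁, Function.update_of_ne h₂]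
  exact hc (deleteEdges_adj.2 ⟨hab, h₁⟩) (deleteEdges_adj.2 ⟨hbd, h₂⟩) had

lemma IsAcyclic.exists_isProperEdgeColoring [Finite V] (hG : G.IsAcyclic) {k : ℕ}
    (hdeg : ∀ v, (G.neighborSet v).ncard ≤ k) :
    ∃ c : Sym2 V → ℕ, (∀ e ∈ G.edgeSet, c e < k) ∧ IsProperEdgeColoring G c := by
  classical
  induction hn : G.edgeSet.ncard using Nat.strong_induction_on generalizing G with
  | _ n ih =>
  rcases G.edgeSet.eq_empty_or_nonempty with hE | hE
  · refine ⟨0, by simp [hE], fun a b _ hab => ?_⟩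
    exact absurd (show s(a, b) ∈ G.edgeSet from hab) (hE ▸ Set.notMem_empty _)
  obtain ⟨x, u, hxu, hleaf⟩ := hG.exists_adj_forall_adj_eq hE
  set G' := G.deleteEdges {s(x, u)}
  have hG' : G' ≤ G := deleteEdges_le _
  have hN : ∀ v, G'.neighborSet v ⊆ G.neighborSet v := fun v w hw => hG' hw
  have hx : x ∉ G'.neighborSet u := fun h => (deleteEdges_adj.1 h).2 (by simp [Sym2.eq_swap])
  have hcard : G'.edgeSet.ncard < n := by
    rw [← hn, edgeSet_deleteEdges]
    exact Set.ncard_sdiff_singleton_lt_of_mem hxu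
  obtain ⟨c, hck, hc⟩ := ih _ hcard (hG.anti hG')
    (fun v => (Set.ncard_le_ncard (hN v)).trans (hdeg v)) rfl
  have hdegu : (G'.neighborSet u).ncard < k :=
    (Set.ncard_lt_ncard ((Set.ssubset_iff_of_subset (hN u)).2 ⟨x, hxu.symm, hx⟩)).trans_le
      (hdeg u)
  obtain ⟨γ, hγk, hγ⟩ := Set.exists_mem_notMem_of_ncard_lt_ncard
    (s := (fun w => c s(u, w)) '' G'.neighborSet u) (t := Set.Iio k)
    (by simpa using lt_of_le_of_lt Set.ncard_image_le hdegu)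
  refine ⟨Function.update c s(x, u) γ, fun e he => ?_, ?_⟩
  · by_cases hex : e = s(x, u)
    · simpa [hex] using hγk
    · rw [Function.update_of_ne hex]
      exact hck e (by simp [G', he, hex])
  · exact hc.update_of_leaf hleaf fun w hw hcw => hγ ⟨w, hw, hcw⟩

lemma IsEdgeMatching.ncard_neighborSet_deleteEdges_le [Finite V] {M : Set (Sym2 V)}
    (hM : IsEdgeMatching G M) {k : ℕ} (hdeg : ∀ v, (G.neighborSet v).ncard ≤ k + 1)
    (hcov : ∀ v, (G.neighborSet v).ncard = k + 1 → v ∈ coveredVerts M) (v : V) :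
    ((G.deleteEdges M).neighborSet v).ncard ≤ k := by
  have hsub : (G.deleteEdges M).neighborSet v ⊆ G.neighborSet v :=
    fun w hw => (deleteEdges_adj.1 hw).1
  by_cases hv : v ∈ coveredVerts M
  · obtain ⟨e, he, hve⟩ := hv
    obtain ⟨w, rfl⟩ := Sym2.mem_iff_exists.mp hve
    have := Set.ncard_lt_ncard ((Set.ssubset_iff_of_subset hsub).2
      ⟨w, hM.1 he, fun hw => (deleteEdges_adj.1 hw).2 he⟩)
    have := hdeg v
    omega
  · have := mt (hcov v) hv
    have := hdeg v
    have := Set.ncard_le_ncard hsub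
    omega

lemma IsAcyclic.exists_isProperEdgeColoring_zero_eq [Finite V] (hG : G.IsAcyclic)
    {M : Set (Sym2 V)} (hM : IsEdgeMatching G M) {k : ℕ}
    (hdeg : ∀ v, (G.neighborSet v).ncard ≤ k + 1)
    (hcov : ∀ v, (G.neighborSet v).ncard = k + 1 → v ∈ coveredVerts M) :
    ∃ c, IsProperEdgeColoring G c ∧ {e | e ∈ G.edgeSet ∧ c e = 0} = M ∧
      numNewColors G c ≤ k := by
  classical
  obtain ⟨c, hck, hc⟩ := (hG.anti (deleteEdges_le M)).exists_isProperEdgeColoring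
    (hM.ncard_neighborSet_deleteEdges_le hdeg hcov)
  refine ⟨fun e => if e ∈ M then 0 else c e + 1, ?_, ?_, ?_⟩
  · intro a b d hab hbd had
    dsimp only
    split_ifs with h₁ h₂ h₂
    · intro
      rcases Sym2.eq_iff.1 (hM.2 _ h₁ _ h₂ b (Sym2.mem_mk_right a b) (Sym2.mem_mk_left b d))
        with ⟨rfl, -⟩ | ⟨rfl, -⟩
      exacts [hab.ne rfl, had rfl]
    · exact (Nat.succ_ne_zero _).symm
    · exact Nat.succ_ne_zero _
    · exact fun h => hc (deleteEdges_adj.2 ⟨hab, h₁⟩) (deleteEdges_adj.2 ⟨hbd, h₂⟩) had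
        (Nat.succ_injective h)
  · ext e
    by_cases he : e ∈ M
    · simp [he, hM.1 he]
    · simp [he]
  · refine (Set.ncard_le_ncard (t := Set.Icc 1 k) ?_).trans (by simp)
    rintro _ ⟨e, ⟨he, hne⟩, rfl⟩
    have heM : e ∉ M := fun h => hne (if_pos h)
    have := hck e (by rw [edgeSet_deleteEdges]; exact ⟨he, heM⟩)
    simp only [if_neg heM, Set.mem_Icc]
    omega

lemma IsTree.eq_of_adj_of_dist_eq_add_one (hG : G.IsTree) (r : V) {a a' b : V}
    (ha : G.Adj a b) (ha' : G.Adj a' b) (hab : G.dist r b = G.dist r a + 1)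
    (ha'b : G.dist r b = G.dist r a' + 1) : a = a' := by
  classical
  obtain ⟨q, hq, -⟩ := (hG.connected r b).exists_path_of_dist
  have eq_penultimate : ∀ a, G.Adj a b → G.dist r b = G.dist r a + 1 → a = q.penultimate := by
    intro a ha hab
    obtain ⟨p, hp, hpl⟩ := (hG.connected r a).exists_path_of_dist
    have hb : b ∉ p.support := fun hb => by
      have := dist_le (p.takeUntil b hb)
      have := p.length_takeUntil_le_length hb
      omega
    exact hG.isAcyclic.eq_penultimate_of_adj_end hq ha.symm
      (hG.isAcyclic.mem_support_of_ne_mem_support_of_adj_of_isPath hq hp ha.symm hb)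
  exact (eq_penultimate a ha hab).trans (eq_penultimate a' ha' ha'b).symm

lemma IsTree.exists_adj_dist_eq_add_one [Finite V] (hG : G.IsTree) (r : V) {x : V}
    (hx : 1 < (G.neighborSet x).ncard) : ∃ u, G.Adj x u ∧ G.dist r u = G.dist r x + 1 := by
  obtain ⟨a, b, ha, hb, hab⟩ := (Set.one_lt_ncard_iff (Set.toFinite _)).1 hx
  rcases hG.dist_eq_dist_add_one_of_adj r ha with ha' | ha'
  · rcases hG.dist_eq_dist_add_one_of_adj r hb with hb' | hb'
    · exact absurd (hG.eq_of_adj_of_dist_eq_add_one r (G.adj_symm ha) (G.adj_symm hb) ha' hb') hab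
    · exact ⟨b, hb, hb'⟩
  · exact ⟨a, ha, ha'⟩

namespace IsEdgeMatching

variable [Finite V] {M : Set (Sym2 V)}

lemma exists_mem_of_adj (hM : IsEdgeMatching G M) (hmax : M.ncard = matchingNum G) {x u : V}
    (hx : x ∉ coveredVerts M) (hxu : G.Adj x u) : ∃ w, s(u, w) ∈ M := by
  by_contra! hu
  have hu' : u ∉ coveredVerts M := by
    rintro ⟨e, he, hue⟩
    obtain ⟨w, rfl⟩ := Sym2.mem_iff_exists.mp hue
    exact hu w he
  have := (hM.insert hxu hx hu').ncard_le_matchingNum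
  rw [Set.ncard_insert_of_notMem fun h => hx ⟨_, h, Sym2.mem_mk_left x u⟩] at this
  omega

lemma one_lt_ncard_neighborSet (hM : IsEdgeMatching G M) (hmax : M.ncard = matchingNum G)
    {x u : V} (hx : x ∉ coveredVerts M) (hxu : G.Adj x u) : 1 < (G.neighborSet u).ncard := by
  obtain ⟨w, huw⟩ := hM.exists_mem_of_adj hmax hx hxu
  refine (Set.one_lt_ncard_iff (Set.toFinite _)).2 ⟨x, w, hxu.symm, hM.1 huw, ?_⟩
  rintro rfl
  exact hx ⟨_, huw, Sym2.mem_mk_right _ _⟩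

end IsEdgeMatching

lemma IsTree.exists_isEdgeMatching_swap [Finite V] (hG : G.IsTree) (r : V)
    {M : Set (Sym2 V)} (hM : IsEdgeMatching G M) (hmax : M.ncard = matchingNum G) {x : V}
    (hx : x ∉ coveredVerts M) (hdeg : 1 < (G.neighborSet x).ncard) :
    ∃ M' w, IsEdgeMatching G M' ∧ M'.ncard = matchingNum G ∧
      insert x (coveredVerts M \ {w}) ⊆ coveredVerts M' ∧ G.dist r w = G.dist r x + 2 := by
  obtain ⟨u, hxu, hu⟩ := hG.exists_adj_dist_eq_add_one r hdeg
  obtain ⟨w, huw⟩ := hM.exists_mem_of_adj hmax hx hxu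
  have hwx : w ≠ x := by
    rintro rfl
    exact hx ⟨_, huw, Sym2.mem_mk_right _ _⟩
  have hw : G.dist r w = G.dist r u + 1 := by
    have huw' : G.Adj u w := hM.1 huw
    refine (hG.dist_eq_dist_add_one_of_adj r huw').resolve_left fun h => hwx ?_
    exact hG.eq_of_adj_of_dist_eq_add_one r huw'.symm hxu h hu
  set N := M \ {s(u, w)}
  have hxN : x ∉ coveredVerts N := fun h => hx (coveredVerts_mono Set.sdiff_subset h)
  have huN : u ∉ coveredVerts N := by
    rintro ⟨e, ⟨he, hne⟩, hue⟩
    obtain ⟨t, rfl⟩ := Sym2.mem_iff_exists.mp hue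
    exact hne (by rw [hM.eq_of_mem he huw]; rfl)
  refine ⟨insert s(x, u) N, w, (hM.mono Set.sdiff_subset).insert hxu hxN huN, ?_, ?_, by omega⟩
  · rw [Set.ncard_insert_of_notMem fun h => hxN ⟨_, h, Sym2.mem_mk_left x u⟩,
      Set.ncard_sdiff_singleton_add_one huw, hmax]
  · rintro v (rfl | ⟨⟨e, he, hve⟩, hvw⟩)
    · exact ⟨_, Set.mem_insert _ _, Sym2.mem_mk_left _ _⟩
    by_cases heuw : e = s(u, w)
    · subst heuw
      rcases Sym2.mem_iff.1 hve with rfl | rfl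
      · exact ⟨_, Set.mem_insert _ _, Sym2.mem_mk_right _ _⟩
      · exact absurd rfl hvw
    · exact ⟨e, Set.mem_insert_of_mem _ ⟨he, heuw⟩, hve⟩

lemma IsTree.exists_isEdgeMatching_covers_maxDeg [Fintype V] (hG : G.IsTree)
    (hD : 0 < maxDeg G) :
    ∃ M, IsEdgeMatching G M ∧ M.ncard = matchingNum G ∧
      ∀ v, (G.neighborSet v).ncard = maxDeg G → v ∈ coveredVerts M := by
  classical
  obtain ⟨r⟩ := hG.connected.nonempty
  let uncovered (M : Set (Sym2 V)) : Finset V :=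
    {v | (G.neighborSet v).ncard = maxDeg G ∧ v ∉ coveredVerts M}
  let weight (M : Set (Sym2 V)) : ℕ := ∑ v ∈ uncovered M, (Fintype.card V - G.dist r v)
  obtain ⟨M, ⟨hM, hmax⟩, hmin⟩ :=
    Set.exists_min_image {M | IsEdgeMatching G M ∧ M.ncard = matchingNum G} weight
      (Set.toFinite _) (exists_isEdgeMatching_ncard_eq_matchingNum G)
  refine ⟨M, hM, hmax, fun x hx => ?_⟩
  by_contra hxM
  have hx1 : 1 < (G.neighborSet x).ncard := by
    obtain ⟨u, hxu⟩ := Set.nonempty_of_ncard_ne_zero (hx ▸ hD.ne')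
    exact (hM.one_lt_ncard_neighborSet hmax hxM hxu).trans_le
      (hx ▸ G.ncard_neighborSet_le_maxDeg u)
  obtain ⟨M', w, hM', hmax', hcov, hw⟩ := hG.exists_isEdgeMatching_swap r hM hmax hxM hx1
  have hdist : G.dist r x < Fintype.card V := by
    obtain ⟨p, hp, hpl⟩ := (hG.connected r x).exists_path_of_dist
    exact hpl ▸ hp.length_lt
  have hsub : uncovered M' ⊆ insert w ((uncovered M).erase x) := by
    intro v hv
    simp only [uncovered, Finset.mem_filter, Finset.mem_univ, true_and, Finset.mem_insert,
      Finset.mem_erase] at hv ⊢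
    by_cases hvw : v = w
    · exact Or.inl hvw
    · exact Or.inr ⟨fun hvx => hv.2 (hcov (Or.inl hvx)), hv.1,
        fun hvM => hv.2 (hcov (Or.inr ⟨hvM, hvw⟩))⟩
  have hlt : weight M' < weight M :=
    Finset.sum_lt_sum_of_subset_insert_erase (by simp [uncovered, hx, hxM]) hsub (by omega)
  exact (hmin M' ⟨hM', hmax'⟩).not_gt hlt

lemma IsTree.exists_properlyConnected_add_le [Fintype V] (hG : G.IsTree) (hD : 0 < maxDeg G) :
    ∃ c, ProperlyConnected G c ∧
      numRecolored G c + numNewColors G c + matchingNum G + 1 ≤ G.edgeSet.ncard + maxDeg G := by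
  obtain ⟨M, hM, hmax, hcov⟩ := hG.exists_isEdgeMatching_covers_maxDeg hD
  obtain ⟨k, hk⟩ := Nat.exists_eq_add_one.2 hD
  obtain ⟨c, hc, hzero, hnew⟩ := hG.isAcyclic.exists_isProperEdgeColoring_zero_eq hM
    (fun v => hk ▸ G.ncard_neighborSet_le_maxDeg v) (fun v hv => hcov v (hk ▸ hv))
  have hedges := numRecolored_add_ncard_zero G c
  rw [hzero] at hedges
  exact ⟨c, hc.properlyConnected hG.connected, by omega⟩

end SimpleGraph

/-- pc_opt(T) = n - 2 - α'(T) + Δ(T), stated additively to avoid truncated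
natural subtraction. -/
theorem stmt11 {V : Type*} [Fintype V] (T : SimpleGraph V) (hT : T.IsTree)
    (hn : 2 ≤ Fintype.card V) :
    pcOpt T + matchingNum T + 2 = Fintype.card V + maxDeg T := by
  have hedges := hT.ncard_edgeSet_add_one
  have hD : 0 < maxDeg T := maxDeg_pos (Set.nonempty_of_ncard_ne_zero (by omega))
  obtain ⟨c, hc, hle⟩ := hT.exists_properlyConnected_add_le hD
  have hupper : pcOpt T ≤ numRecolored T c + numNewColors T c := Nat.sInf_le ⟨c, hc, rfl⟩
  obtain ⟨c₀, hc₀, hopt⟩ : pcOpt T ∈ _ := Nat.sInf_mem ⟨_, c, hc, rfl⟩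
  have hlower := hc₀.ncard_edgeSet_add_maxDeg_le hT.isAcyclic
  omega
end

section
/- For every tree T on n ≥ 3 vertices, the forest obtained by deleting from T the edges of a suitably chosen maximum matching has maximum degree strictly less than Δ(T). -/
open SimpleGraph

/-!
Let a maximum matching of a tree `T` miss a vertex `v` of degree at least two, and walk away from
`v` along an alternating path. If the current unmatched vertex `y` has two neighbours, one of them,
`x`, lies farther from `v`; `x` is matched (else the matching could be enlarged) to some `z` farther
still, and exchanging the edge `xz` for `yx` keeps the matching maximum and moves the unmatched
vertex to `z`. An unmatched vertex as far from `v` as possible is thus a leaf, traded for `v`.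
Hence some maximum matching covers every vertex of degree at least two, in particular every vertex
of degree `Δ(T) ≥ 2`; deleting its edges lowers the degree of each covered vertex, and the uncovered
ones are leaves.
-/

namespace SimpleGraph

variable {V : Type*} {G : SimpleGraph V}

lemma ncard_neighborSet_eq_degree (G : SimpleGraph V) (v : V) [Fintype (G.neighborSet v)] :
    (G.neighborSet v).ncard = G.degree v := by
  rw [← Nat.card_coe_set_eq, Nat.card_eq_fintype_card, card_neighborSet_eq_degree]

lemma maxDeg_eq_maxDegree [Fintype V] [Nonempty V] [DecidableRel G.Adj] :
    maxDeg G = G.maxDegree := by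
  have hrange : {d | ∃ v, d = (G.neighborSet v).ncard} = Set.range fun v => G.degree v := by
    ext d
    simp [ncard_neighborSet_eq_degree, eq_comm]
  obtain ⟨v, hv⟩ := G.exists_maximal_degree_vertex
  rw [maxDeg, hrange]
  exact IsGreatest.csSup_eq ⟨⟨v, hv.symm⟩, Set.forall_mem_range.2 G.degree_le_maxDegree⟩

lemma degree_deleteEdges_lt {s : Set (Sym2 V)} {v w : V} [Fintype (G.neighborSet v)]
    [Fintype ((G.deleteEdges s).neighborSet v)] (hvw : G.Adj v w) (hs : s(v, w) ∈ s) :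
    (G.deleteEdges s).degree v < G.degree v := by
  rw [← card_neighborSet_eq_degree, ← card_neighborSet_eq_degree]
  refine Set.card_lt_card ⟨fun u hu => ((deleteEdges_adj ..).1 hu).1, fun h => ?_⟩
  exact ((deleteEdges_adj ..).1 (h hvw)).2 hs

lemma IsTree.exists_one_lt_degree [Fintype V] [DecidableRel G.Adj] (hG : G.IsTree)
    (hcard : 3 ≤ Fintype.card V) : ∃ v, 1 < G.degree v := by
  classical
  by_contra! h
  have hsum : ∑ v, G.degree v ≤ Fintype.card V := by
    simpa using Finset.sum_le_sum fun v (_ : v ∈ Finset.univ) => h v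
  have := hG.card_edgeFinset
  rw [G.sum_degrees_eq_twice_card_edges] at hsum
  omega

lemma Walk.notMem_support_of_length_eq_dist {u v w : V} {p : G.Walk u v}
    (hp : p.length = G.dist u v) (hw : G.dist u v < G.dist u w) : w ∉ p.support := by
  classical
  exact fun hwp => ((G.dist_le _).trans ((p.length_takeUntil_le_length hwp).trans hp.le)).not_gt hw

lemma IsTree.eq_of_adj_of_dist_lt (hG : G.IsTree) {v x y z : V} (hy : G.Adj x y) (hz : G.Adj x z)
    (hyx : G.dist v y < G.dist v x) (hzx : G.dist v z < G.dist v x) : y = z := by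
  obtain ⟨p, hp, -⟩ := hG.connected.exists_path_of_dist v x
  have hpen : ∀ u, G.Adj x u → G.dist v u < G.dist v x → u = p.penultimate := fun u hu hux => by
    obtain ⟨q, hq, hql⟩ := hG.connected.exists_path_of_dist v u
    exact hG.isAcyclic.eq_penultimate_of_adj_end hp hu <|
      hG.isAcyclic.mem_support_of_ne_mem_support_of_adj_of_isPath hp hq hu <|
        Walk.notMem_support_of_length_eq_dist hql hux
  rw [hpen y hy hyx, hpen z hz hzx]

lemma IsTree.dist_lt_of_adj_of_ne (hG : G.IsTree) {v x y z : V} (hy : G.Adj x y) (hz : G.Adj x z)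
    (hyz : y ≠ z) (hyx : G.dist v y < G.dist v x) : G.dist v x < G.dist v z := by
  rcases hG.dist_eq_dist_add_one_of_adj v hz with h | h
  · exact absurd (hG.eq_of_adj_of_dist_lt hy hz hyx (by omega)) hyz
  · omega

lemma IsTree.exists_adj_dist_lt (hG : G.IsTree) (v : V) {w : V} [Fintype (G.neighborSet w)]
    (hw : 1 < G.degree w) : ∃ x, G.Adj w x ∧ G.dist v w < G.dist v x := by
  rw [← card_neighborSet_eq_degree, Fintype.one_lt_card_iff] at hw
  obtain ⟨⟨a, ha⟩, ⟨b, hb⟩, hab⟩ := hw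
  rcases hG.dist_eq_dist_add_one_of_adj v ha with h | h
  · exact ⟨b, hb, hG.dist_lt_of_adj_of_ne ha hb (by simpa using hab) (by omega)⟩
  · exact ⟨a, ha, by omega⟩

namespace Subgraph

variable {M : G.Subgraph} {a b v w x y : V}

structure IsMaximumMatching (M : G.Subgraph) : Prop where
  isMatching : M.IsMatching
  ncard_edgeSet : M.edgeSet.ncard = matchingNum G

lemma bddAbove_ncard_edgeSet_isMatching [Finite V] :
    BddAbove {n | ∃ M : G.Subgraph, M.IsMatching ∧ n = M.edgeSet.ncard} :=
  ⟨(Set.univ : Set (Sym2 V)).ncard, by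
    rintro n ⟨M, -, rfl⟩
    exact Set.ncard_le_ncard (Set.subset_univ _)⟩

lemma IsMatching.ncard_edgeSet_le_matchingNum [Finite V] (hM : M.IsMatching) :
    M.edgeSet.ncard ≤ matchingNum G :=
  le_csSup bddAbove_ncard_edgeSet_isMatching ⟨M, hM, rfl⟩

lemma exists_isMaximumMatching [Finite V] (G : SimpleGraph V) :
    ∃ M : G.Subgraph, M.IsMaximumMatching := by
  have hne : {n | ∃ M : G.Subgraph, M.IsMatching ∧ n = M.edgeSet.ncard}.Nonempty :=
    ⟨0, ⊥, fun _ hv => hv.elim, by simp⟩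
  obtain ⟨M, hM, h⟩ := Nat.sSup_mem hne bddAbove_ncard_edgeSet_isMatching
  exact ⟨M, hM, h.symm⟩

lemma IsMatching.sup_subgraphOfAdj (hM : M.IsMatching) (ha : a ∉ M.verts) (hb : b ∉ M.verts)
    (hab : G.Adj a b) : (M ⊔ G.subgraphOfAdj hab).IsMatching :=
  hM.sup (.subgraphOfAdj hab) <| by
    rw [hM.support_eq_verts, (IsMatching.subgraphOfAdj hab).support_eq_verts, subgraphOfAdj_verts]
    simp [ha, hb]

lemma ncard_edgeSet_sup_subgraphOfAdj [Finite V] (ha : a ∉ M.verts) (hab : G.Adj a b) :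
    (M ⊔ G.subgraphOfAdj hab).edgeSet.ncard = M.edgeSet.ncard + 1 := by
  rw [edgeSet_sup, edgeSet_subgraphOfAdj, Set.union_singleton, Set.ncard_insert_of_notMem]
  exact fun h => ha (M.edge_vert h)

lemma IsMatching.deleteVerts_pair (hM : M.IsMatching) (hxy : M.Adj x y) :
    (M.deleteVerts {x, y}).IsMatching := by
  rintro v ⟨hv, hvxy⟩
  obtain ⟨w, hvw, huniq⟩ := hM hv
  refine ⟨w, deleteVerts_adj.2 ⟨hv, hvxy, hvw.snd_mem, ?_, hvw⟩,
    fun u hu => huniq u (deleteVerts_adj.1 hu).2.2.2.2⟩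
  rintro (rfl | rfl)
  · exact hvxy (Or.inr (hM.eq_of_adj_left hvw.symm hxy))
  · exact hvxy (Or.inl (hM.eq_of_adj_right hvw hxy))

lemma IsMatching.edgeSet_deleteVerts_pair (hM : M.IsMatching) (hxy : M.Adj x y) :
    (M.deleteVerts {x, y}).edgeSet = M.edgeSet \ {s(x, y)} := by
  ext e
  induction e using Sym2.ind with
  | _ u v =>
    rw [Set.mem_sdiff, Subgraph.mem_edgeSet, Subgraph.mem_edgeSet, deleteVerts_adj,
      Set.mem_singleton_iff]
    constructor
    · rintro ⟨-, hu, -, -, huv⟩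
      exact ⟨huv, fun h => hu (Sym2.mem_iff.1 (h ▸ Sym2.mem_mk_left u v))⟩
    · rintro ⟨huv, hne⟩
      have hend : ∀ {a b}, M.Adj a b → a ∈ ({x, y} : Set V) → s(a, b) = s(x, y) := by
        rintro a b hab (rfl | rfl)
        · rw [hM.eq_of_adj_left hab hxy]
        · rw [hM.eq_of_adj_left hab hxy.symm, Sym2.eq_swap]
      exact ⟨huv.fst_mem, fun hu => hne (hend huv hu), huv.snd_mem,
        fun hv => hne (Sym2.eq_swap.trans (hend huv.symm hv)), huv⟩

lemma IsMaximumMatching.mem_verts_of_adj [Finite V] (hM : M.IsMaximumMatching) (ha : a ∉ M.verts)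
    (hab : G.Adj a b) : b ∈ M.verts := by
  by_contra hb
  have := (hM.isMatching.sup_subgraphOfAdj ha hb hab).ncard_edgeSet_le_matchingNum
  rw [ncard_edgeSet_sup_subgraphOfAdj ha, hM.ncard_edgeSet] at this
  omega

/-- Exchanging the matched edge `xy` for `wx` moves the uncovered vertex from `w` to `y`. -/
lemma IsMaximumMatching.exists_exchange [Finite V] (hM : M.IsMaximumMatching) (hw : w ∉ M.verts)
    (hwx : G.Adj w x) (hxy : M.Adj x y) :
    ∃ N : G.Subgraph, N.IsMaximumMatching ∧ y ∉ N.verts ∧ insert y N.verts = insert w M.verts := by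
  set D := M.deleteVerts {x, y}
  have hwD : w ∉ D.verts := fun h => hw h.1
  have hxD : x ∉ D.verts := fun h => h.2 (Or.inl rfl)
  have hyw : y ≠ w := fun h => hw (h ▸ hxy.snd_mem)
  refine ⟨D ⊔ G.subgraphOfAdj hwx,
    ⟨(hM.isMatching.deleteVerts_pair hxy).sup_subgraphOfAdj hwD hxD hwx, ?_⟩, ?_, ?_⟩
  · rw [ncard_edgeSet_sup_subgraphOfAdj hwD, hM.isMatching.edgeSet_deleteVerts_pair hxy,
      Set.ncard_sdiff_singleton_add_one (Subgraph.mem_edgeSet.2 hxy), hM.ncard_edgeSet]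
  · simp [D, hyw, hxy.ne.symm]
  · ext u
    simp only [D, verts_sup, deleteVerts_verts, subgraphOfAdj_verts, Set.mem_insert_iff,
      Set.mem_union, Set.mem_sdiff, Set.mem_singleton_iff]
    grind [Adj.fst_mem, Adj.snd_mem]

end Subgraph

open Subgraph

variable [Fintype V] [DecidableRel G.Adj]

lemma IsTree.exists_exchange_degree_le_one (hG : G.IsTree) {M : G.Subgraph}
    (hM : M.IsMaximumMatching) {v : V} (hv : v ∉ M.verts) :
    ∃ (N : G.Subgraph) (y : V), N.IsMaximumMatching ∧ y ∉ N.verts ∧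
      insert y N.verts = insert v M.verts ∧ G.degree y ≤ 1 := by
  let S : Set (G.Subgraph × V) :=
    {P | P.1.IsMaximumMatching ∧ P.2 ∉ P.1.verts ∧ insert P.2 P.1.verts = insert v M.verts}
  obtain ⟨⟨N, y⟩, ⟨hN, hy, hNy⟩, hfar⟩ :=
    S.exists_max_image (fun P => G.dist v P.2) S.toFinite ⟨(M, v), hM, hv, rfl⟩
  refine ⟨N, y, hN, hy, hNy, not_lt.1 fun hdeg => ?_⟩
  obtain ⟨x, hyx, hdx⟩ := hG.exists_adj_dist_lt v hdeg
  obtain ⟨z, hxz, -⟩ := hN.isMatching (hN.mem_verts_of_adj hy hyx)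
  obtain ⟨N', hN', hz, hN'z⟩ := hN.exists_exchange hy hyx hxz
  have hzy : z ≠ y := fun h => hy (h ▸ hxz.snd_mem)
  have hle := hfar (N', z) ⟨hN', hz, hN'z.trans hNy⟩
  have hlt := hG.dist_lt_of_adj_of_ne hyx.symm (N.adj_sub hxz) hzy.symm hdx
  dsimp only at hle
  omega

lemma IsTree.exists_isMaximumMatching_forall_one_lt_degree_mem_verts (hG : G.IsTree) :
    ∃ M : G.Subgraph, M.IsMaximumMatching ∧ ∀ v, 1 < G.degree v → v ∈ M.verts := by
  let missed (M : G.Subgraph) : Set V := {v | v ∉ M.verts ∧ 1 < G.degree v}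
  obtain ⟨M, hM, hmin⟩ := Set.exists_min_image {M : G.Subgraph | M.IsMaximumMatching}
    (fun M => (missed M).ncard) (Set.toFinite _) (exists_isMaximumMatching G)
  refine ⟨M, hM, fun v hv => by_contra fun hvM => ?_⟩
  obtain ⟨N, y, hN, hy, hNy, hdeg⟩ := hG.exists_exchange_degree_le_one hM hvM
  have hmem : ∀ u, u = y ∨ u ∈ N.verts ↔ u = v ∨ u ∈ M.verts := fun u => by
    simpa using Set.ext_iff.1 hNy u
  have hsub : missed N ⊂ missed M := by
    refine ⟨fun u ⟨hu, hdu⟩ => ⟨fun huM => ?_, hdu⟩, fun h => ?_⟩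
    · rcases (hmem u).2 (Or.inr huM) with rfl | huN
      · omega
      · exact hu huN
    · rcases (hmem v).2 (Or.inl rfl) with rfl | hvN
      · omega
      · exact (h ⟨hvM, hv⟩).1 hvN
  exact (hmin N hN).not_gt (Set.ncard_lt_ncard hsub)

end SimpleGraph

open SimpleGraph

theorem stmt14 {V : Type*} [Fintype V] (T : SimpleGraph V) (hT : T.IsTree)
    (hn : 3 ≤ Fintype.card V) :
    ∃ M : SimpleGraph.Subgraph T, M.IsMatching ∧ M.edgeSet.ncard = matchingNum T ∧
      maxDeg (T.deleteEdges M.edgeSet) ≤ maxDeg T - 1 := by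
  classical
  have : Nonempty V := Fintype.card_pos_iff.mp (by omega)
  obtain ⟨M, hM, hcover⟩ := hT.exists_isMaximumMatching_forall_one_lt_degree_mem_verts
  refine ⟨M, hM.isMatching, hM.ncard_edgeSet, ?_⟩
  obtain ⟨u, hu⟩ := hT.exists_one_lt_degree hn
  have hΔ := T.degree_le_maxDegree u
  rw [maxDeg_eq_maxDegree, maxDeg_eq_maxDegree]
  refine maxDegree_le_of_forall_degree_le _ _ fun v => ?_
  by_cases hv : 1 < T.degree v
  · obtain ⟨w, hvw, -⟩ := hM.isMatching (hcover v hv)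
    have := degree_deleteEdges_lt (M.adj_sub hvw) (Subgraph.mem_edgeSet.2 hvw)
    have := T.degree_le_maxDegree v
    omega
  · have := degree_le_of_le (v := v) (T.deleteEdges_le M.edgeSet)
    omega
end

section
/- Any recoloring that makes a monochromatic graph G properly connected must recolor at least ⌊diam(G)/2⌋ edges, provided G is not complete. -/
open SimpleGraph

/-- Diameter of a graph. -/
noncomputable def gDiam {V : Type*} (G : SimpleGraph V) : ℕ :=
  sSup { d | ∃ u v : V, d = G.dist u v }

lemma filter_chain' : ∀ (l : List ℕ), l.Chain' (· ≠ ·) →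
    l.length / 2 ≤ (l.filter (fun x => x ≠ 0)).length
  | [], _ => by simp
  | [a], _ => by simp
  | a :: b :: t, h => by
    have hab : a ≠ b := (List.isChain_cons_cons.mp h).1
    have ih := filter_chain' t ((List.isChain_cons_cons.mp h).2).tail
    simp only [List.filter_cons]
    split_ifs with h1 h2 h2 <;> simp_all <;> omega

theorem stmt16 {V : Type*} [Fintype V] (G : SimpleGraph V) (hconn : G.Connected)
    (hnc : ¬ ∀ u v : V, u ≠ v → G.Adj u v)
    (c : Sym2 V → ℕ) (hpc : ProperlyConnected G c) :
    gDiam G / 2 ≤ numRecolored G c := by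
  classical
  by_cases hd : gDiam G ≤ 1
  · have : gDiam G / 2 = 0 := Nat.div_eq_of_lt (by omega)
    omega
  push_neg at hd
  obtain ⟨u, v, huv⟩ : ∃ u v : V, gDiam G = G.dist u v := by
    have hne : Nonempty V := hconn.nonempty
    have hS : {d | ∃ u v : V, d = G.dist u v}.Finite := by
      have hsub : {d | ∃ u v : V, d = G.dist u v} ⊆
          Set.range (fun p : V × V => G.dist p.1 p.2) := by
        rintro d ⟨u, v, rfl⟩; exact ⟨(u, v), rfl⟩
      exact (Set.finite_range _).subset hsub
    have hSne : {d | ∃ u v : V, d = G.dist u v}.Nonempty :=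
      ⟨G.dist (Classical.arbitrary V) (Classical.arbitrary V),
        Classical.arbitrary V, Classical.arbitrary V, rfl⟩
    exact Nat.sSup_mem hSne hS.bddAbove
  have hune : u ≠ v := by
    intro h; rw [h, SimpleGraph.dist_self] at huv; omega
  obtain ⟨p, hp, hpw⟩ := hpc u v hune
  have hlen : G.dist u v ≤ p.length := SimpleGraph.dist_le p
  have hchain : (p.edges.map c).Chain' (· ≠ ·) := hpw
  have key := filter_chain' (p.edges.map c) hchain
  rw [List.length_map, List.filter_map, List.length_map] at key
  have hnodup : p.edges.Nodup := hp.edges_nodup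
  have hsubset : ((p.edges.filter ((fun x => decide (x ≠ 0)) ∘ c)).toFinset : Set (Sym2 V))
      ⊆ {e | e ∈ G.edgeSet ∧ c e ≠ 0} := by
    intro e he
    simp only [List.coe_toFinset, Set.mem_setOf_eq, List.mem_filter] at he
    refine ⟨p.edges_subset_edgeSet he.1, by simpa using he.2⟩
  have hfin : ({e | e ∈ G.edgeSet ∧ c e ≠ 0} : Set (Sym2 V)).Finite := Set.toFinite _
  have hcard := Set.ncard_le_ncard hsubset hfin
  rw [Set.ncard_coe_finset, List.toFinset_card_of_nodup (hnodup.filter _)] at hcard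
  have hlee : p.edges.length = p.length := p.length_edges
  unfold numRecolored
  have h1 : gDiam G / 2 ≤ p.length / 2 := Nat.div_le_div_right (huv ▸ hlen)
  omega
end
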